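/- (Extension) In any model H of HST: if S is a standard set and F is a function defined on σS = {x ∈ S : st x} such that F(x) contains at least one internal element for every x ∈ σS, then there exists an internal function f defined on S satisfying f(x) ∈ F(x) for every x ∈ σS. -/

import Mathlib

/-!
Semantic framework for models of Hrbaček set theory (HST) in the ∈-st-language,
following Kanovei–Reeken, "Isomorphism property in nonstandard extensions of the
ZFC universe".

A model is a type `M` together with a membership relation `mem : M → M → Prop`
and a standardness predicate `stP : M → Prop`.  Formulas of the ∈-st-language
are deeply embedded (`StFormula`), so that axiom schemata can be stated.
All set-theoretic notions (pairs, functions, ordinals, ...) are expressed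
relative to a class `C : M → Prop`, which also yields relativizations
(to the standard universe, the internal universe, inner classes, etc.).
-/

universe u v

namespace HSTF

variable {M : Type u}

def TrueC {M : Type u} : M → Prop := fun _ => True
def FalseC {M : Type u} : M → Prop := fun _ => False

/-! ### Formulas of the ∈-st-language -/

inductive StFormula : ℕ → Type where
  | mem {n} (i j : Fin n) : StFormula n
  | eq {n} (i j : Fin n) : StFormula n
  | st {n} (i : Fin n) : StFormula n
  | not {n} (φ : StFormula n) : StFormula n
  | and {n} (φ ψ : StFormula n) : StFormula n
  | all {n} (φ : StFormula (n + 1)) : StFormula n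

/-- ∈-formulas: formulas in which the standardness predicate does not occur. -/
def StFormula.IsEpsilon : ∀ {n}, StFormula n → Prop
  | _, .mem _ _ => True
  | _, .eq _ _ => True
  | _, .st _ => False
  | _, .not φ => φ.IsEpsilon
  | _, .and φ ψ => φ.IsEpsilon ∧ ψ.IsEpsilon
  | _, .all φ => φ.IsEpsilon

/-- Evaluation of a formula in `(M, mem, stP)`, with all quantifiers
relativized to the class `C`. -/
def EvalIn (mem : M → M → Prop) (stP : M → Prop) (C : M → Prop) :
    ∀ {n}, StFormula n → (Fin n → M) → Prop
  | _, .mem i j, val => mem (val i) (val j)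
  | _, .eq i j, val => val i = val j
  | _, .st i, val => stP (val i)
  | _, .not φ, val => ¬ EvalIn mem stP C φ val
  | _, .and φ ψ, val => EvalIn mem stP C φ val ∧ EvalIn mem stP C ψ val
  | _, .all φ, val => ∀ x, C x → EvalIn mem stP C φ (Fin.snoc val x)

/-! ### Set-theoretic coding, relative to a class `C` -/

section Coding
variable (mem : M → M → Prop) (C : M → Prop)

def EmptyIn (e : M) : Prop := ∀ z, C z → ¬ mem z e

def SingIn (s x : M) : Prop := ∀ z, C z → (mem z s ↔ z = x)

def UPairIn (p x y : M) : Prop := ∀ z, C z → (mem z p ↔ (z = x ∨ z = y))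

/-- `p` is the Kuratowski ordered pair `⟨x, y⟩`, relative to `C`. -/
def OPairIn (p x y : M) : Prop :=
  ∃ s t, C s ∧ C t ∧ SingIn mem C s x ∧ UPairIn mem C t x y ∧ UPairIn mem C p s t

/-- `f(x) = y` for a set-coded function `f` (a set of ordered pairs). -/
def FValIn (f x y : M) : Prop := ∃ p, C p ∧ mem p f ∧ OPairIn mem C p x y

/-- `f` is a (set-coded) function with domain exactly the class `D`. -/
def FuncOnIn (f : M) (D : M → Prop) : Prop :=
  (∀ p, C p → mem p f → ∃ x y, C x ∧ C y ∧ D x ∧ OPairIn mem C p x y) ∧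
  (∀ x, C x → D x → ∃ y, C y ∧ FValIn mem C f x y) ∧
  (∀ x y y', C x → C y → C y' → FValIn mem C f x y → FValIn mem C f x y' → y = y')

def SubIn (x y : M) : Prop := ∀ z, C z → mem z x → mem z y

def TransIn (x : M) : Prop := ∀ y, C y → mem y x → ∀ z, C z → mem z y → mem z x

/-- `s = x ∪ {x}`. -/
def SuccIn (s x : M) : Prop := ∀ z, C z → (mem z s ↔ (mem z x ∨ z = x))

/-- `∈` restricted to `x` is well-founded (in the sense of the model):
every nonempty subset (of the model, in `C`) of `x` has an `∈`-minimal element. -/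
def WFIn (x : M) : Prop :=
  ∀ Y, C Y → SubIn mem C Y x → (∃ w, C w ∧ mem w Y) →
    ∃ w, C w ∧ mem w Y ∧ ∀ u, C u → mem u w → ¬ mem u Y

/-- `x` is an ordinal: a transitive set well-ordered by `∈` (relative to `C`). -/
def OrdIn (x : M) : Prop :=
  TransIn mem C x ∧
  (∀ y z, C y → C z → mem y x → mem z x → (mem y z ∨ y = z ∨ mem z y)) ∧
  (∀ y z w, C y → C z → C w → mem y x → mem z x → mem w x → mem y z → mem z w → mem y w) ∧
  (∀ y, C y → mem y x → ¬ mem y y) ∧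
  WFIn mem C x

/-- `x` is a natural number: an ordinal such that every ordinal `≤ x`
is zero or a successor. -/
def NatIn (x : M) : Prop :=
  OrdIn mem C x ∧ ∀ y, C y → (y = x ∨ mem y x) →
    (EmptyIn mem C y ∨ ∃ z, C z ∧ SuccIn mem C y z)

/-- `x` and `y` are equinumerous via a (set-coded) bijection, relative to `C`. -/
def EquinumIn (x y : M) : Prop :=
  ∃ f, C f ∧ FuncOnIn mem C f (fun z => mem z x) ∧
    (∀ a b w, C a → C b → C w → FValIn mem C f a w → FValIn mem C f b w → a = b) ∧
    (∀ w, C w → (mem w y ↔ ∃ a, C a ∧ mem a x ∧ FValIn mem C f a w))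

def FiniteIn (x : M) : Prop := ∃ n, C n ∧ NatIn mem C n ∧ EquinumIn mem C x n

/-- `x` is a cardinal: an ordinal not equinumerous to any smaller ordinal. -/
def CardinalIn (x : M) : Prop :=
  OrdIn mem C x ∧ ∀ y, C y → mem y x → ¬ EquinumIn mem C x y

/-- The set `r` (of ordered pairs) well-orders the set `x`, relative to `C`. -/
def WOrdersIn (r x : M) : Prop :=
  (∀ a b, C a → C b → mem a x → mem b x → a ≠ b →
    ((∃ p, C p ∧ mem p r ∧ OPairIn mem C p a b) ∨ (∃ p, C p ∧ mem p r ∧ OPairIn mem C p b a))) ∧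
  (∀ a, C a → mem a x → ¬ ∃ p, C p ∧ mem p r ∧ OPairIn mem C p a a) ∧
  (∀ a b c, C a → C b → C c →
    (∃ p, C p ∧ mem p r ∧ OPairIn mem C p a b) → (∃ p, C p ∧ mem p r ∧ OPairIn mem C p b c) →
    (∃ p, C p ∧ mem p r ∧ OPairIn mem C p a c)) ∧
  (∀ Y, C Y → SubIn mem C Y x → (∃ w, C w ∧ mem w Y) →
    ∃ a, C a ∧ mem a Y ∧ ∀ b, C b → mem b Y → b ≠ a → ∃ p, C p ∧ mem p r ∧ OPairIn mem C p a b)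

def WOableIn (x : M) : Prop := ∃ r, C r ∧ WOrdersIn mem C r x

end Coding

/-! ### ZFC, relativized to a class -/

/-- The class `C` of `(M, mem)` is a model of ZFC (with the Separation and
Collection schemata for ∈-formulas, and Choice in the form of the
well-ordering principle). -/
structure ZFCModelIn (mem : M → M → Prop) (C : M → Prop) : Prop where
  nonemp : ∃ x, C x
  ext : ∀ x y, C x → C y → (∀ z, C z → (mem z x ↔ mem z y)) → x = y
  pair : ∀ x y, C x → C y → ∃ p, C p ∧ UPairIn mem C p x y
  union : ∀ x, C x → ∃ u, C u ∧ ∀ z, C z → (mem z u ↔ ∃ y, C y ∧ mem y x ∧ mem z y)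
  power : ∀ x, C x → ∃ pw, C pw ∧ ∀ z, C z → (mem z pw ↔ SubIn mem C z x)
  infinity : ∃ w, C w ∧ (∃ e, C e ∧ mem e w ∧ EmptyIn mem C e) ∧
    ∀ x, C x → mem x w → ∃ s, C s ∧ mem s w ∧ SuccIn mem C s x
  foundation : ∀ x, C x → (∃ y, C y ∧ mem y x) →
    ∃ y, C y ∧ mem y x ∧ ∀ z, C z → mem z y → ¬ mem z x
  separation : ∀ {n} (φ : StFormula (n + 1)), φ.IsEpsilon →
    ∀ val : Fin n → M, (∀ i, C (val i)) → ∀ x, C x →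
      ∃ s, C s ∧ ∀ z, C z → (mem z s ↔ mem z x ∧ EvalIn mem FalseC C φ (Fin.snoc val z))
  collection : ∀ {n} (φ : StFormula (n + 2)), φ.IsEpsilon →
    ∀ val : Fin n → M, (∀ i, C (val i)) → ∀ x, C x →
      ∃ B, C B ∧ ∀ a, C a → mem a x →
        (∃ b, C b ∧ EvalIn mem FalseC C φ (Fin.snoc (Fin.snoc val a) b)) →
        ∃ b, C b ∧ mem b B ∧ EvalIn mem FalseC C φ (Fin.snoc (Fin.snoc val a) b)
  choice_wo : ∀ x, C x → ∃ r, C r ∧ WOrdersIn mem C r x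

/-! ### HST -/

/-- `x` is internal: a member of some standard set. -/
def Internal (mem : M → M → Prop) (stP : M → Prop) (x : M) : Prop := ∃ y, stP y ∧ mem x y

/-- `x` is a set of standard size: the image of `σS = {z ∈ S : st z}`
(for some standard `S`) under some (set-coded) function. -/
def SSize (mem : M → M → Prop) (stP : M → Prop) (x : M) : Prop :=
  ∃ S f, stP S ∧ FuncOnIn mem TrueC f (fun z => stP z ∧ mem z S) ∧
    ∀ y, mem y x ↔ ∃ a, stP a ∧ mem a S ∧ FValIn mem TrueC f a y

/-- `(M, mem, stP)` is a model of Hrbaček set theory HST. -/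
structure HSTModel (mem : M → M → Prop) (stP : M → Prop) : Prop where
  /-- 1a: the standard universe models ZFC (the relativization `Φ^st` of every
  ZFC axiom `Φ`). -/
  zfc_st : ZFCModelIn mem stP
  /-- 1b: Transfer for ∈-formulas with standard parameters, between the
  standard and the internal universe. -/
  transfer : ∀ {n} (φ : StFormula (n + 1)), φ.IsEpsilon →
    ∀ val : Fin n → M, (∀ i, stP (val i)) →
      ((∃ x, Internal mem stP x ∧ EvalIn mem FalseC (Internal mem stP) φ (Fin.snoc val x)) ↔
       (∃ x, stP x ∧ EvalIn mem FalseC (Internal mem stP) φ (Fin.snoc val x)))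
  /-- 1c: elements of internal sets are internal. -/
  internal_trans : ∀ x y, Internal mem stP x → mem y x → Internal mem stP y
  /-- 2: Standardization. -/
  standardization : ∀ X, ∃ Y, stP Y ∧ ∀ z, stP z → (mem z Y ↔ mem z X)
  /-- 3: Extensionality. -/
  ext : ∀ x y, (∀ z, mem z x ↔ mem z y) → x = y
  /-- 3: Pairing. -/
  pairing : ∀ x y, ∃ p, UPairIn mem TrueC p x y
  /-- 3: Union. -/
  union : ∀ x, ∃ u, ∀ z, mem z u ↔ ∃ y, mem y x ∧ mem z y
  /-- 3: Infinity. -/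
  infinity : ∃ w, (∃ e, mem e w ∧ EmptyIn mem TrueC e) ∧
    ∀ x, mem x w → ∃ s, mem s w ∧ SuccIn mem TrueC s x
  /-- 3: Separation for all ∈-st-formulas. -/
  separation : ∀ {n} (φ : StFormula (n + 1)) (val : Fin n → M) (x : M),
    ∃ s, ∀ z, mem z s ↔ (mem z x ∧ EvalIn mem stP TrueC φ (Fin.snoc val z))
  /-- 3: Collection for all ∈-st-formulas. -/
  collection : ∀ {n} (φ : StFormula (n + 2)) (val : Fin n → M) (x : M),
    ∃ B, ∀ a, mem a x → (∃ b, EvalIn mem stP TrueC φ (Fin.snoc (Fin.snoc val a) b)) →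
      ∃ b, mem b B ∧ EvalIn mem stP TrueC φ (Fin.snoc (Fin.snoc val a) b)
  /-- 3: Replacement for all ∈-st-formulas. -/
  replacement : ∀ {n} (φ : StFormula (n + 2)) (val : Fin n → M) (x : M),
    (∀ a b b', EvalIn mem stP TrueC φ (Fin.snoc (Fin.snoc val a) b) →
      EvalIn mem stP TrueC φ (Fin.snoc (Fin.snoc val a) b') → b = b') →
    ∃ B, ∀ b, mem b B ↔ ∃ a, mem a x ∧ EvalIn mem stP TrueC φ (Fin.snoc (Fin.snoc val a) b)
  /-- 4: Weak Regularity. -/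
  weak_reg : ∀ X, (∃ x, mem x X) →
    ∃ x, mem x X ∧ ∀ y, mem y x → mem y X → Internal mem stP y
  /-- 5: Saturation for standard size families of internal sets. -/
  saturation : ∀ X, SSize mem stP X → (∀ Y, mem Y X → Internal mem stP Y) →
    (∀ X', (∃ Y, mem Y X') → SubIn mem TrueC X' X → FiniteIn mem TrueC X' →
      ∃ z, ∀ Y, mem Y X' → mem z Y) →
    ∃ z, ∀ Y, mem Y X → mem z Y
  /-- 6: Choice for families indexed by a set of standard size. -/
  ss_choice : ∀ X, SSize mem stP X → (∀ x, mem x X → ∃ y, mem y x) →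
    ∃ f, FuncOnIn mem TrueC f (fun x => mem x X) ∧
      ∀ x y, mem x X → FValIn mem TrueC f x y → mem y x
  /-- 6: Dependent Choice. -/
  dep_choice : ∀ X R x0, mem x0 X →
    (∀ x, mem x X → ∃ y, mem y X ∧ ∃ q, mem q R ∧ OPairIn mem TrueC q x y) →
    ∃ w f, (∀ z, mem z w ↔ NatIn mem TrueC z) ∧ FuncOnIn mem TrueC f (fun k => mem k w) ∧
      (∀ k y, mem k w → FValIn mem TrueC f k y → mem y X) ∧
      (∀ e, EmptyIn mem TrueC e → mem e w → FValIn mem TrueC f e x0) ∧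
      (∀ k s y y', mem k w → mem s w → SuccIn mem TrueC s k →
        FValIn mem TrueC f k y → FValIn mem TrueC f s y' →
        ∃ q, mem q R ∧ OPairIn mem TrueC q y y')

/-! ### BST -/

/-- The class `C` (with the standardness predicate `stP`) is a model of
bounded set theory BST. -/
structure BSTModelIn (mem : M → M → Prop) (stP : M → Prop) (C : M → Prop) : Prop where
  /-- ZFC in the ∈-language. -/
  zfc : ZFCModelIn mem C
  /-- standard sets belong to the universe. -/
  st_sub : ∀ x, stP x → C x
  /-- Bounded Idealization. -/
  bdd_idealization : ∀ {n} (φ : StFormula (n + 2)), φ.IsEpsilon →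
    ∀ val : Fin n → M, (∀ i, C (val i)) → ∀ X, stP X →
      ((∀ A, stP A → FiniteIn mem C A →
          ∃ x, C x ∧ mem x X ∧ ∀ a, C a → mem a A →
            EvalIn mem stP C φ (Fin.snoc (Fin.snoc val x) a)) ↔
       (∃ x, C x ∧ mem x X ∧ ∀ a, stP a →
          EvalIn mem stP C φ (Fin.snoc (Fin.snoc val x) a)))
  /-- Standardization for all ∈-st-formulas. -/
  standardization : ∀ {n} (φ : StFormula (n + 1)) (val : Fin n → M), (∀ i, C (val i)) →
    ∀ X, stP X → ∃ Y, stP Y ∧ ∀ x, stP x →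
      (mem x Y ↔ (mem x X ∧ EvalIn mem stP C φ (Fin.snoc val x)))
  /-- Transfer. -/
  transfer : ∀ {n} (φ : StFormula (n + 1)), φ.IsEpsilon →
    ∀ val : Fin n → M, (∀ i, stP (val i)) →
      (∃ x, C x ∧ EvalIn mem FalseC C φ (Fin.snoc val x)) →
      ∃ x, stP x ∧ EvalIn mem FalseC C φ (Fin.snoc val x)
  /-- Boundedness. -/
  boundedness : ∀ x, C x → ∃ X, stP X ∧ mem x X

/-! ### Condensation -/

/-- `h` is the condensation map: `h x = {h y : y ∈ x, y standard}` for standard `x`. -/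
def Condenses (mem : M → M → Prop) (stP : M → Prop) (h : M → M) : Prop :=
  ∀ x, stP x → ∀ z, mem z (h x) ↔ ∃ y, stP y ∧ mem y x ∧ z = h y

/-- The condensed subuniverse `V = {h x : x standard}`. -/
def CondV (stP : M → Prop) (h : M → M) (z : M) : Prop := ∃ x, stP x ∧ z = h x

/-! ### Internally presented structures and the isomorphism property -/

/-- `t` codes the tuple `l` (as an iterated Kuratowski pair). -/
def TupCode (mem : M → M → Prop) : List M → M → Prop
  | [], t => ∀ z, ¬ mem z t
  | x :: l, t => ∃ r, OPairIn mem TrueC t x r ∧ TupCode mem l r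

/-- `(A, R)` is an internally presented structure of the (relational) language
with symbols `ι` and arities `ar`: the base set `A` and each interpretation
`R s` (a set of `ar s`-tuples from `A`) is internal. -/
def IntPresented (mem : M → M → Prop) (stP : M → Prop) {ι : Type v} (ar : ι → ℕ)
    (A : M) (R : ι → M) : Prop :=
  Internal mem stP A ∧ ∀ s : ι, Internal mem stP (R s) ∧
    ∀ t, mem t (R s) → ∃ l : List M, l.length = ar s ∧ (∀ x ∈ l, mem x A) ∧ TupCode mem l t

/-- First-order formulas of a relational language. -/
inductive FOF (ι : Type v) (ar : ι → ℕ) : ℕ → Type v where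
  | rel {n} (s : ι) (ts : Fin (ar s) → Fin n) : FOF ι ar n
  | eq {n} (i j : Fin n) : FOF ι ar n
  | not {n} (φ : FOF ι ar n) : FOF ι ar n
  | and {n} (φ ψ : FOF ι ar n) : FOF ι ar n
  | all {n} (φ : FOF ι ar (n + 1)) : FOF ι ar n

/-- Satisfaction in an internally presented structure. -/
def FOSat (mem : M → M → Prop) {ι : Type v} {ar : ι → ℕ} (A : M) (R : ι → M) :
    ∀ {n}, FOF ι ar n → (Fin n → M) → Prop
  | _, .rel s ts, val => ∃ t, TupCode mem (List.ofFn fun k => val (ts k)) t ∧ mem t (R s)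
  | _, .eq i j, val => val i = val j
  | _, .not φ, val => ¬ FOSat mem A R φ val
  | _, .and φ ψ, val => FOSat mem A R φ val ∧ FOSat mem A R ψ val
  | _, .all φ, val => ∀ x, mem x A → FOSat mem A R φ (Fin.snoc val x)

/-- Elementary equivalence of the two structures. -/
def ElemEq (mem : M → M → Prop) {ι : Type v} (ar : ι → ℕ)
    (A : M) (RA : ι → M) (B : M) (RB : ι → M) : Prop :=
  ∀ φ : FOF ι ar 0, (FOSat mem A RA φ Fin.elim0 ↔ FOSat mem B RB φ Fin.elim0)

/-- The two structures are isomorphic (via an isomorphism which is a set of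
the model). -/
def IsoIn (mem : M → M → Prop) {ι : Type v}
    (A : M) (RA : ι → M) (B : M) (RB : ι → M) : Prop :=
  ∃ f : M, FuncOnIn mem TrueC f (fun x => mem x A) ∧
    (∀ x y, mem x A → FValIn mem TrueC f x y → mem y B) ∧
    (∀ x x' y, FValIn mem TrueC f x y → FValIn mem TrueC f x' y → x = x') ∧
    (∀ y, mem y B → ∃ x, mem x A ∧ FValIn mem TrueC f x y) ∧
    (∀ (s : ι) (l l' : List M), (∀ x ∈ l, mem x A) →
      List.Forall₂ (FValIn mem TrueC f) l l' →
      ∀ t t', TupCode mem l t → TupCode mem l' t' → (mem t (RA s) ↔ mem t' (RB s)))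

/-- The index type `ι` is of standard size: it is equinumerous (externally)
with `σS = {x ∈ S : st x}` for some standard `S`. -/
def SSizeIndex (mem : M → M → Prop) (stP : M → Prop) (ι : Type v) : Prop :=
  ∃ S : M, stP S ∧ ∃ e : ι → M, Function.Injective e ∧
    (∀ i, stP (e i) ∧ mem (e i) S) ∧ (∀ x, stP x → mem x S → ∃ i, e i = x)

/-- The isomorphism property IP: any two internally presented elementarily
equivalent structures of a language with (standard size)-many symbols are
isomorphic. -/
def IPProp (mem : M → M → Prop) (stP : M → Prop) : Prop :=
  ∀ (ι : Type u) (ar : ι → ℕ), SSizeIndex mem stP ι →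
    ∀ (A : M) (RA : ι → M) (B : M) (RB : ι → M),
      IntPresented mem stP ar A RA → IntPresented mem stP ar B RB →
      ElemEq mem ar A RA B RB → IsoIn mem A RA B RB

/-! ### Partially ordered sets inside the model; closure and distributivity -/

section PO
variable (mem : M → M → Prop)

/-- `p ≤ q` according to the set `R` of ordered pairs. -/
def LeVia (R p q : M) : Prop := ∃ z, mem z R ∧ OPairIn mem TrueC z p q

/-- `⟨P; R⟩` is a partially ordered set (coded in the model). -/
def IsPOOn (P R : M) : Prop :=
  (∀ z, mem z R → ∃ p q, mem p P ∧ mem q P ∧ OPairIn mem TrueC z p q) ∧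
  (∀ p, mem p P → LeVia mem R p p) ∧
  (∀ p q, LeVia mem R p q → LeVia mem R q p → p = q) ∧
  (∀ p q r, LeVia mem R p q → LeVia mem R q r → LeVia mem R p r)

/-- `⟨P; R⟩` is `κ`-closed: every decreasing `κ`-sequence (a set-coded function
on `κ`) has a lower bound. -/
def KClosed (κ P R : M) : Prop :=
  ∀ f, FuncOnIn mem TrueC f (fun α => mem α κ) →
    (∀ α y, mem α κ → FValIn mem TrueC f α y → mem y P) →
    (∀ α β u w, mem α β → mem β κ → FValIn mem TrueC f α u → FValIn mem TrueC f β w →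
      LeVia mem R w u) →
    ∃ p, mem p P ∧ ∀ α u, mem α κ → FValIn mem TrueC f α u → LeVia mem R p u

/-- `Y` is an open dense subset of `⟨P; R⟩`. -/
def OpenDenseIn (P R Y : M) : Prop :=
  (∀ y, mem y Y → mem y P) ∧
  (∀ p, mem p P → ∃ q, mem q Y ∧ LeVia mem R q p) ∧
  (∀ p q, mem p P → mem q Y → LeVia mem R p q → mem p Y)

/-- `⟨P; R⟩` is `κ`-distributive: the intersection of `κ`-many open dense
subsets is dense. -/
def KDistrib (κ P R : M) : Prop :=
  ∀ Df, FuncOnIn mem TrueC Df (fun α => mem α κ) →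
    (∀ α Y, mem α κ → FValIn mem TrueC Df α Y → OpenDenseIn mem P R Y) →
    ∀ p, mem p P → ∃ q, mem q P ∧ LeVia mem R q p ∧
      ∀ α Y, mem α κ → FValIn mem TrueC Df α Y → mem q Y

/-- For each cardinal `κ`, every `κ`-closed p.o. set is `κ`-distributive. -/
def KClosedDistrib : Prop :=
  ∀ κ, CardinalIn mem TrueC κ → ∀ P R, IsPOOn mem P R → KClosed mem κ P R → KDistrib mem κ P R

/-- `⟨P; R⟩` is standard size distributive: `κ`-distributive for every cardinal. -/
def SSDistribOn (P R : M) : Prop :=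
  ∀ κ, CardinalIn mem TrueC κ → KDistrib mem κ P R

end PO

/-! ### The class L[I] of sets constructible from internal sets -/

section LI
variable (mem : M → M → Prop) (stP : M → Prop)

/-- `n` is a natural number of the internal universe. -/
def INat (n : M) : Prop := Internal mem stP n ∧ NatIn mem (Internal mem stP) n

/-- `t` is an internal finite sequence: an internal function whose domain is a
natural number of the internal universe. -/
def IsISeq (t : M) : Prop :=
  Internal mem stP t ∧ ∃ n, INat mem stP n ∧ FuncOnIn mem TrueC t (fun i => mem i n)

/-- `T` is a tree: a nonempty set of internal finite sequences closed under
initial segments. -/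
def IsTreeSet (T : M) : Prop :=
  (∃ t, mem t T) ∧ (∀ t, mem t T → IsISeq mem stP t) ∧
  (∀ t, mem t T → ∀ t', IsISeq mem stP t' → SubIn mem TrueC t' t → mem t' T)

/-- `t` is a `⊆`-maximal element of `T`. -/
def MaxIn (T t : M) : Prop := mem t T ∧ ∀ s, mem s T → SubIn mem TrueC t s → s = t

/-- `T` is well-founded: every nonempty subset of `T` has a `⊆`-maximal element. -/
def WfTreeSet (T : M) : Prop :=
  ∀ T', (∃ t, mem t T') → SubIn mem TrueC T' T →
    ∃ t, mem t T' ∧ ∀ s, mem s T' → SubIn mem TrueC t s → s = t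

/-- `s = t ⌢ a`. -/
def IsConcat (s t a : M) : Prop :=
  ∃ n n', INat mem stP n ∧ SuccIn mem TrueC n' n ∧
    FuncOnIn mem TrueC t (fun i => mem i n) ∧ FuncOnIn mem TrueC s (fun i => mem i n') ∧
    (∀ i w, mem i n → (FValIn mem TrueC t i w ↔ FValIn mem TrueC s i w)) ∧
    FValIn mem TrueC s n a

/-- `p` is of the form `⟨A, B, η⟩` with `A, B` standard and `η` an internal
function on `A × B`. -/
def CpForm (p A B η : M) : Prop :=
  (∃ r, OPairIn mem TrueC p A r ∧ OPairIn mem TrueC r B η) ∧ stP A ∧ stP B ∧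
    Internal mem stP η ∧
    FuncOnIn mem TrueC η (fun q => ∃ a b, mem a A ∧ mem b B ∧ OPairIn mem TrueC q a b)

/-- `z = C_p = ⋃_{a ∈ σA} ⋂_{b ∈ σB} η(a,b)` (and `z = ∅` if `p` is not of
the appropriate form). -/
def IsCp (p z : M) : Prop :=
  (∃ A B η, CpForm mem stP p A B η ∧
    ∀ x, mem x z ↔ ∃ a, stP a ∧ mem a A ∧ ∀ b, stP b → mem b B →
      ∃ q w, OPairIn mem TrueC q a b ∧ FValIn mem TrueC η q w ∧ mem x w) ∨
  ((¬ ∃ A B η, CpForm mem stP p A B η) ∧ ∀ x, ¬ mem x z)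

/-- `z` is an elementary external set. -/
def EE (z : M) : Prop := ∃ p, Internal mem stP p ∧ IsCp mem stP p z

/-- `⟨T, F⟩` is a wf pair with `T, F ∈ E`: `T` is a wf tree and
`F : Max T → I`. -/
def IsWfPairHC (T F : M) : Prop :=
  EE mem stP T ∧ EE mem stP F ∧ IsTreeSet mem stP T ∧ WfTreeSet mem T ∧
  FuncOnIn mem TrueC F (MaxIn mem T) ∧
  (∀ t y, FValIn mem TrueC F t y → Internal mem stP y)

/-- `z ∈ L[I]`: `z = F[T]` for some wf pair `⟨T, F⟩ ∈ H`, witnessed by an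
assembling function `g` (so `z = F_T(Λ)`). -/
def LIclass (z : M) : Prop :=
  ∃ T F, IsWfPairHC mem stP T F ∧ ∃ g : M → M,
    (∀ t, MaxIn mem T t → FValIn mem TrueC F t (g t)) ∧
    (∀ t, mem t T → ¬ MaxIn mem T t →
      ∀ w, mem w (g t) ↔ ∃ s, mem s T ∧ (∃ a, IsConcat mem stP s t a) ∧ w = g s) ∧
    ∃ e, (∀ w, ¬ mem w e) ∧ mem e T ∧ z = g e

end LI

end HSTF

namespace HSTF

variable {M : Type u}

/-! ### Forcing over a model of HST -/

/-- `H` is well-founded over `I`: the ordinals of the model are well-founded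
in the wider universe. -/
def WfOverI (mem : M → M → Prop) : Prop :=
  WellFounded (fun x y : M => OrdIn mem TrueC x ∧ OrdIn mem TrueC y ∧ mem x y)

/-- `a = x̆ = ⟨0, x⟩`, the canonical name for `x`. -/
def IsBreve (mem : M → M → Prop) (a x : M) : Prop :=
  ∃ e, (∀ z, ¬ mem z e) ∧ OPairIn mem TrueC a e x

/-- `a` is a `P`-name (for the class `Pp` of forcing conditions):
either a canonical name `x̆`, or a set of pairs `⟨p, b⟩` with `p` a condition
and `b` a name. -/
inductive IsName (mem : M → M → Prop) (Pp : M → Prop) : M → Prop where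
  | ground (a x : M) (h : IsBreve mem a x) : IsName mem Pp a
  | mk (a : M) (pf bf : M → M)
      (h : ∀ z, mem z a → Pp (pf z) ∧ OPairIn mem TrueC z (pf z) (bf z))
      (hrec : ∀ z, mem z a → IsName mem Pp (bf z)) : IsName mem Pp a

/-- External values of names: either an element of the model (an atom) or a
set of previously constructed values. -/
inductive GVal (M : Type u) : Type (u + 1) where
  | atom (x : M) : GVal M
  | mk (ι : Type u) (f : ι → GVal M) : GVal M

/-- The value `v` is extensionally equal to (the model element) `x`. -/
def AEq (mem : M → M → Prop) : M → GVal M → Prop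
  | x, .atom y => x = y
  | x, .mk _ f => (∀ y, mem y x → ∃ i, AEq mem y (f i)) ∧ (∀ i, ∃ y, mem y x ∧ AEq mem y (f i))

/-- Extensional equality of values (identifying a value with a model element
having the same members). -/
def GEquiv (mem : M → M → Prop) : GVal M → GVal M → Prop
  | .atom x, v => AEq mem x v
  | .mk ι f, .atom y => AEq mem y (.mk ι f)
  | .mk _ f, .mk _ g => (∀ i, ∃ j, GEquiv mem (f i) (g j)) ∧ (∀ j, ∃ i, GEquiv mem (f i) (g j))

/-- Membership between values. -/
def GMem (mem : M → M → Prop) : GVal M → GVal M → Prop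
  | u, .atom x => ∃ y, mem y x ∧ GEquiv mem u (.atom y)
  | u, .mk _ f => ∃ i, GEquiv mem u (f i)

/-- `u` is the value `a[G]` of the name `a` under the generic class `G`. -/
inductive ValRel (mem : M → M → Prop) (Pp G : M → Prop) : M → GVal M → Prop where
  | ground (a x : M) (h : IsBreve mem a x) : ValRel mem Pp G a (GVal.atom x)
  | proper (a : M) (ι : Type u) (f : ι → GVal M)
      (hng : ¬ ∃ x, IsBreve mem a x)
      (sel : M → M → M → ι)
      (h1 : ∀ z p b, mem z a → Pp p → G p → OPairIn mem TrueC z p b →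
        ValRel mem Pp G b (f (sel z p b)))
      (zf pf bf : ι → M)
      (h2 : ∀ i, mem (zf i) a ∧ Pp (pf i) ∧ G (pf i) ∧
        OPairIn mem TrueC (zf i) (pf i) (bf i))
      (h3 : ∀ i, ValRel mem Pp G (bf i) (f i)) :
      ValRel mem Pp G a (GVal.mk ι f)

/-- Carrier of the generic extension `H[G]` (before extensional collapse). -/
def HGCarrier (mem : M → M → Prop) (Pp G : M → Prop) : Type (u + 1) :=
  {w : GVal M // ∃ a, IsName mem Pp a ∧ ValRel mem Pp G a w}

/-- The generic extension `H[G] = {a[G] : a a name}`, extensional values being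
identified. -/
def HGType (mem : M → M → Prop) (Pp G : M → Prop) : Type (u + 1) :=
  Quot (fun u w : HGCarrier mem Pp G => GEquiv mem u.1 w.1)

/-- Membership `∈_G` of the extension. -/
def QMem (mem : M → M → Prop) (Pp G : M → Prop) (a b : HGType mem Pp G) : Prop :=
  ∃ u w : HGCarrier mem Pp G, a = Quot.mk _ u ∧ b = Quot.mk _ w ∧ GMem mem u.1 w.1

/-- Standardness in the extension. -/
def QSt (mem : M → M → Prop) (stP Pp G : M → Prop) (a : HGType mem Pp G) : Prop :=
  ∃ u : HGCarrier mem Pp G, a = Quot.mk _ u ∧ ∃ s, stP s ∧ GEquiv mem u.1 (GVal.atom s)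

/-- `b` (an element of `H[G]`) is the value `a[G]` of the name `a`. -/
def Represents (mem : M → M → Prop) (Pp G : M → Prop) (b : HGType mem Pp G) (a : M) : Prop :=
  ∃ u : HGCarrier mem Pp G, b = Quot.mk _ u ∧ ValRel mem Pp G a u.1

/-- `G` is generic over the model, for the conditions `Pp` ordered by `ple`:
upward closed, directed, and meeting every dense subset belonging to the model. -/
def GenericOver (mem : M → M → Prop) (Pp : M → Prop) (ple : M → M → Prop) (G : M → Prop) :
    Prop :=
  (∀ p, G p → Pp p) ∧
  (∀ p q, G p → Pp q → ple p q → G q) ∧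
  (∀ p q, G p → G q → ∃ r, G r ∧ ple r p ∧ ple r q) ∧
  (∀ D : M, (∀ z, mem z D → Pp z) → (∀ p, Pp p → ∃ q, mem q D ∧ ple q p) →
    ∃ q, G q ∧ mem q D)

/-- The auxiliary relation `p ⊩* b ∈ a`. -/
def SFo (mem : M → M → Prop) (Pp : M → Prop) (ple : M → M → Prop) (p b a : M) : Prop :=
  (∃ x, IsBreve mem a x ∧ ∃ y, mem y x ∧ IsBreve mem b y) ∨
  ((¬ ∃ x, IsBreve mem a x) ∧ ∃ q z, Pp q ∧ ple p q ∧ mem z a ∧ OPairIn mem TrueC z q b)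

/-- Forcing for atomic formulas: `AFo _ _ _ true p a b` means `p ⊩ a = b`,
and `AFo _ _ _ false p b a` means `p ⊩ b ∈ a`. -/
inductive AFo (mem : M → M → Prop) (Pp : M → Prop) (ple : M → M → Prop) :
    Bool → M → M → M → Prop where
  | breveEq (p a b x y : M) (ha : IsBreve mem a x) (hb : IsBreve mem b y) (hxy : x = y) :
      AFo mem Pp ple true p a b
  | breveMem (p b a x y : M) (hb : IsBreve mem b y) (ha : IsBreve mem a x) (hm : mem y x) :
      AFo mem Pp ple false p b a
  | eqI (p a b : M)
      (h1 : ∀ q x, Pp q → ple q p → SFo mem Pp ple q x a → AFo mem Pp ple false q x b)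
      (h2 : ∀ q y, Pp q → ple q p → SFo mem Pp ple q y b → AFo mem Pp ple false q y a) :
      AFo mem Pp ple true p a b
  | memI (p b a : M) (rf zf : M → M)
      (h1 : ∀ q, Pp q → ple q p → Pp (rf q) ∧ ple (rf q) q ∧ SFo mem Pp ple (rf q) (zf q) a)
      (h2 : ∀ q, Pp q → ple q p → AFo mem Pp ple true (rf q) b (zf q)) :
      AFo mem Pp ple false p b a

/-- The forcing relation `p ⊩ Φ`, for a formula with names as parameters. -/
def Fo (mem : M → M → Prop) (stP : M → Prop) (Pp : M → Prop) (ple : M → M → Prop) :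
    ∀ {n}, M → StFormula n → (Fin n → M) → Prop
  | _, p, .mem i j, val => AFo mem Pp ple false p (val i) (val j)
  | _, p, .eq i j, val => AFo mem Pp ple true p (val i) (val j)
  | _, p, .st i, val => ∀ q, Pp q → ple q p → ∃ r, Pp r ∧ ple r q ∧
      ∃ s b, stP s ∧ IsBreve mem b s ∧ AFo mem Pp ple true r (val i) b
  | _, p, .not φ, val => ∀ q, Pp q → ple q p → ¬ Fo mem stP Pp ple q φ val
  | _, p, .and φ ψ, val => Fo mem stP Pp ple p φ val ∧ Fo mem stP Pp ple p ψ val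
  | _, p, .all φ, val => ∀ a, IsName mem Pp a → Fo mem stP Pp ple p φ (Fin.snoc val a)

/-! ### The type-theoretic extension L^∞ and the forcing P_{LAB} -/

/-- Types of the type-theoretic extension: `0` and `τ(l₁, …, l_k)`. -/
inductive TType : Type where
  | zero : TType
  | tau (l : List TType) : TType

mutual
/-- `x` is an object of type `l` over the internal set `D`. -/
def ObjType (mem : M → M → Prop) (intl : M → Prop) (D : M) : TType → M → Prop
  | .zero, x => mem x D
  | .tau ls, x => intl x ∧ ∀ z, mem z x → ObjTuple mem intl D ls z
/-- `z` codes a tuple of objects of the given types over `D`. -/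
def ObjTuple (mem : M → M → Prop) (intl : M → Prop) (D : M) : List TType → M → Prop
  | [], z => ∀ w, ¬ mem w z
  | t :: ts, z => ∃ y r, OPairIn mem TrueC z y r ∧ ObjType mem intl D t y ∧
      ObjTuple mem intl D ts r
end

mutual
/-- The canonical extension `p^l` of an internal bijection `p` to objects of
type `l`: `PExt mem intl p l x y` means `p^l(x) = y`. -/
def PExt (mem : M → M → Prop) (intl : M → Prop) (p : M) : TType → M → M → Prop
  | .zero, x, y => FValIn mem TrueC p x y
  | .tau ls, x, y => intl y ∧
      (∀ z, mem z x → ∃ w, mem w y ∧ PExtTuple mem intl p ls z w) ∧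
      (∀ w, mem w y → ∃ z, mem z x ∧ PExtTuple mem intl p ls z w)
def PExtTuple (mem : M → M → Prop) (intl : M → Prop) (p : M) : List TType → M → M → Prop
  | [], z, w => (∀ u, ¬ mem u z) ∧ (∀ u, ¬ mem u w)
  | t :: ts, z, w => ∃ x r x' r', OPairIn mem TrueC z x r ∧ OPairIn mem TrueC w x' r' ∧
      PExt mem intl p t x x' ∧ PExtTuple mem intl p ts r r'
end

/-- Formulas of the type-theoretic extension `L^∞` of the language with symbols
`ι`; `m` counts the `L`-variables, `Γ` is the context of typed variables. -/
inductive LIF (ι : Type v) : ℕ → List TType → Type v where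
  | rel {m Γ} (s : ι) (k : ℕ) (ts : Fin k → Fin m) : LIF ι m Γ
  | eqL {m Γ} (i j : Fin m) : LIF ι m Γ
  | eqT {m Γ} (i : Fin m) (j : Fin Γ.length) (h : Γ.get j = TType.zero) : LIF ι m Γ
  | app {m Γ} (f : Fin Γ.length) (args : List (Fin Γ.length))
      (h : Γ.get f = TType.tau (args.map Γ.get)) : LIF ι m Γ
  | not {m Γ} (φ : LIF ι m Γ) : LIF ι m Γ
  | and {m Γ} (φ ψ : LIF ι m Γ) : LIF ι m Γ
  | allL {m Γ} (φ : LIF ι (m + 1) Γ) : LIF ι m Γ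
  | allT {m Γ} (t : TType) (φ : LIF ι m (t :: Γ)) : LIF ι m Γ

/-- Satisfaction of an `L^∞`-formula in the structure `A[D]` (base set `Amb`,
typed domains over `D`, interpretations `R`). -/
def SatInf {ι : Type v} (mem : M → M → Prop) (intl : M → Prop) (Amb D : M) (R : ι → M) :
    ∀ {m Γ}, LIF ι m Γ → (Fin m → M) → (Fin Γ.length → M) → Prop
  | _, _, .rel s _ ts, vL, _ => ∃ t, TupCode mem (List.ofFn fun i => vL (ts i)) t ∧ mem t (R s)
  | _, _, .eqL i j, vL, _ => vL i = vL j
  | _, _, .eqT i j _, vL, vT => vL i = vT j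
  | _, _, .app f args _, _, vT => ∃ t, TupCode mem (args.map vT) t ∧ mem t (vT f)
  | _, _, .not φ, vL, vT => ¬ SatInf mem intl Amb D R φ vL vT
  | _, _, .and φ ψ, vL, vT => SatInf mem intl Amb D R φ vL vT ∧ SatInf mem intl Amb D R ψ vL vT
  | _, _, .allL φ, vL, vT => ∀ x, mem x Amb → SatInf mem intl Amb D R φ (Fin.cons x vL) vT
  | _, _, .allT t φ, vL, vT => ∀ x, ObjType mem intl D t x →
      SatInf mem intl Amb D R φ vL (Fin.cons x vT)

/-- `p` is a condition of the forcing `P_{LAB}` with domain `D` and range `E`: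
an internal 1-1 map of `D ⊆ A` onto `E ⊆ B` preserving all closed
`L^∞`-formulas with parameters in `D^∞`. -/
def PCondOn (mem : M → M → Prop) (stP : M → Prop) {ι : Type v}
    (A B : M) (RA RB : ι → M) (D E p : M) : Prop :=
  Internal mem stP p ∧ Internal mem stP D ∧ Internal mem stP E ∧
  SubIn mem TrueC D A ∧ SubIn mem TrueC E B ∧
  FuncOnIn mem TrueC p (fun x => mem x D) ∧
  (∀ x x' y, FValIn mem TrueC p x y → FValIn mem TrueC p x' y → x = x') ∧
  (∀ y, mem y E ↔ ∃ x, mem x D ∧ FValIn mem TrueC p x y) ∧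
  (∀ (Γ : List TType) (φ : LIF ι 0 Γ) (vT wT : Fin Γ.length → M),
    (∀ j, ObjType mem (Internal mem stP) D (Γ.get j) (vT j)) →
    (∀ j, PExt mem (Internal mem stP) p (Γ.get j) (vT j) (wT j)) →
    (SatInf mem (Internal mem stP) A D RA φ Fin.elim0 vT ↔
     SatInf mem (Internal mem stP) B E RB φ Fin.elim0 wT))

/-- `p ∈ P_{LAB}`. -/
def PCond (mem : M → M → Prop) (stP : M → Prop) {ι : Type v}
    (A B : M) (RA RB : ι → M) (p : M) : Prop :=
  ∃ D E, PCondOn mem stP A B RA RB D E p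

/-! ### The product forcing Π -/

section Pi
variable (mem : M → M → Prop) (stP : M → Prop)

/-- `i = ⟨w, κ, L, A, B⟩`. -/
def Is5Tup (i w κ L A B : M) : Prop :=
  ∃ r1 r2 r3, OPairIn mem TrueC i w r1 ∧ OPairIn mem TrueC r1 κ r2 ∧
    OPairIn mem TrueC r2 L r3 ∧ OPairIn mem TrueC r3 A B

/-- `κ` is a cardinal of the internal universe. -/
def ICardinal (κ : M) : Prop :=
  Internal mem stP κ ∧ CardinalIn mem (Internal mem stP) κ

/-- `x` is internal and finite in the sense of the internal universe. -/
def IFinite (x : M) : Prop := Internal mem stP x ∧ FiniteIn mem (Internal mem stP) x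

/-- `i` is an index: an internal 5-tuple `⟨w, κ, L, A, B⟩` where `κ` is an
I-cardinal, `L` an internal language `{s_α : α < κ}`, and `A`, `B` internal
`L`-structures (coded as pairs of a base set and an interpretation map). -/
def IsIndex (i : M) : Prop :=
  Internal mem stP i ∧ ∃ w κ L A B, Is5Tup mem i w κ L A B ∧
    Internal mem stP w ∧ ICardinal mem stP κ ∧
    Internal mem stP L ∧ FuncOnIn mem TrueC L (fun α => mem α κ) ∧
    (∃ bA iA, OPairIn mem TrueC A bA iA ∧ Internal mem stP bA ∧ Internal mem stP iA ∧
      FuncOnIn mem TrueC iA (fun α => mem α κ)) ∧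
    (∃ bB iB, OPairIn mem TrueC B bB iB ∧ Internal mem stP bB ∧ Internal mem stP iB ∧
      FuncOnIn mem TrueC iB (fun α => mem α κ))

/-- `q ∈ P_{L_i A_i B_i}` for the index with components `κ, A, B`: the
language of the restricted structures has as symbols the standard `α < κ`. -/
def PCondIdx (κ A B q : M) : Prop :=
  ∀ bA iA bB iB, OPairIn mem TrueC A bA iA → OPairIn mem TrueC B bB iB →
    ∀ RA RB : {α : M // stP α ∧ mem α κ} → M,
      (∀ α, FValIn mem TrueC iA α.1 (RA α)) → (∀ α, FValIn mem TrueC iB α.1 (RB α)) →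
      PCond mem stP bA bB RA RB q

/-- `π ∈ Π`: an internal function with internal I-finite domain consisting of
indices, whose value at each index is a condition of the corresponding
forcing `P_{L_i A_i B_i}`. -/
def IsPiCond (π : M) : Prop :=
  Internal mem stP π ∧ ∃ d, Internal mem stP d ∧ IFinite mem stP d ∧
    (∀ i, mem i d → IsIndex mem stP i) ∧ FuncOnIn mem TrueC π (fun i => mem i d) ∧
    (∀ i q w κ L A B, mem i d → FValIn mem TrueC π i q → Is5Tup mem i w κ L A B →
      PCondIdx mem stP κ A B q)

/-- The order of `Π`: `π ≤ ρ` iff the domain of `π` extends that of `ρ` and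
componentwise `π_i ≤ ρ_i` (i.e. `ρ_i ⊆ π_i`). -/
def PiLe (π ρ : M) : Prop :=
  ∀ i q, FValIn mem TrueC ρ i q → ∃ q', FValIn mem TrueC π i q' ∧ SubIn mem TrueC q q'

/-- `Dc` is an open dense subclass of `Π`. -/
def PiOpenDense (Dc : M → Prop) : Prop :=
  (∀ π, Dc π → IsPiCond mem stP π) ∧
  (∀ π, IsPiCond mem stP π → ∃ ρ, Dc ρ ∧ IsPiCond mem stP ρ ∧ PiLe mem ρ π) ∧
  (∀ π ρ, IsPiCond mem stP π → Dc ρ → PiLe mem π ρ → Dc π)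

end Pi

/-! ### Miscellanea for particular statements -/

/-- `X` is infinite in the sense of the internal universe. -/
def InfiniteI (mem : M → M → Prop) (stP : M → Prop) (X : M) : Prop :=
  Internal mem stP X ∧ ¬ FiniteIn mem (Internal mem stP) X

/-- `card X < card Y` in the internal universe. -/
def CardLtI (mem : M → M → Prop) (stP : M → Prop) (X Y : M) : Prop :=
  ∃ κ μ, ICardinal mem stP κ ∧ ICardinal mem stP μ ∧ mem κ μ ∧
    EquinumIn mem (Internal mem stP) X κ ∧ EquinumIn mem (Internal mem stP) Y μ

end HSTF

/-! ### Auxiliary library for the proof of the Extension lemma -/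

namespace HSTF

open StFormula

variable {M : Type u}

namespace StFormula

def orF {n} (φ ψ : StFormula n) : StFormula n := .not (.and (.not φ) (.not ψ))
def impF {n} (φ ψ : StFormula n) : StFormula n := .not (.and φ (.not ψ))
def iffF {n} (φ ψ : StFormula n) : StFormula n := .and (impF φ ψ) (impF ψ φ)
def exF {n} (φ : StFormula (n + 1)) : StFormula n := .not (.all (.not φ))

def singF {n} (s x : Fin n) : StFormula n :=
  .all (iffF (.mem (Fin.last n) s.castSucc) (.eq (Fin.last n) x.castSucc))

def upairF {n} (p x y : Fin n) : StFormula n :=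
  .all (iffF (.mem (Fin.last n) p.castSucc)
    (orF (.eq (Fin.last n) x.castSucc) (.eq (Fin.last n) y.castSucc)))

def opairF {n} (p x y : Fin n) : StFormula n :=
  exF (exF (.and (singF ((Fin.last n).castSucc) (x.castSucc.castSucc))
    (.and (upairF (Fin.last (n + 1)) (x.castSucc.castSucc) (y.castSucc.castSucc))
      (upairF (p.castSucc.castSucc) ((Fin.last n).castSucc) (Fin.last (n + 1))))))

def pmemF {n} (f x y : Fin n) : StFormula n :=
  exF (.and (.mem (Fin.last n) f.castSucc)
    (opairF (Fin.last n) x.castSucc y.castSucc))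

end StFormula

section EvalLemmas

variable {mem : M → M → Prop} {stp C : M → Prop}

@[simp] lemma eval_mem {n} (i j : Fin n) (val : Fin n → M) :
    EvalIn mem stp C (.mem i j) val ↔ mem (val i) (val j) := Iff.rfl

@[simp] lemma eval_eq {n} (i j : Fin n) (val : Fin n → M) :
    EvalIn mem stp C (.eq i j) val ↔ val i = val j := Iff.rfl

@[simp] lemma eval_st {n} (i : Fin n) (val : Fin n → M) :
    EvalIn mem stp C (.st i) val ↔ stp (val i) := Iff.rfl

@[simp] lemma eval_not {n} (φ : StFormula n) (val : Fin n → M) :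
    EvalIn mem stp C (.not φ) val ↔ ¬ EvalIn mem stp C φ val := Iff.rfl

@[simp] lemma eval_and {n} (φ ψ : StFormula n) (val : Fin n → M) :
    EvalIn mem stp C (.and φ ψ) val ↔
      (EvalIn mem stp C φ val ∧ EvalIn mem stp C ψ val) := Iff.rfl

@[simp] lemma eval_all {n} (φ : StFormula (n + 1)) (val : Fin n → M) :
    EvalIn mem stp C (.all φ) val ↔
      ∀ x, C x → EvalIn mem stp C φ (Fin.snoc val x) := Iff.rfl

@[simp] lemma eval_orF {n} (φ ψ : StFormula n) (val : Fin n → M) :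
    EvalIn mem stp C (orF φ ψ) val ↔
      (EvalIn mem stp C φ val ∨ EvalIn mem stp C ψ val) := by
  simp [StFormula.orF]; tauto

@[simp] lemma eval_impF {n} (φ ψ : StFormula n) (val : Fin n → M) :
    EvalIn mem stp C (impF φ ψ) val ↔
      (EvalIn mem stp C φ val → EvalIn mem stp C ψ val) := by
  simp [StFormula.impF]

@[simp] lemma eval_iffF {n} (φ ψ : StFormula n) (val : Fin n → M) :
    EvalIn mem stp C (iffF φ ψ) val ↔
      (EvalIn mem stp C φ val ↔ EvalIn mem stp C ψ val) := by
  simp [StFormula.iffF]; tauto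

@[simp] lemma eval_exF {n} (φ : StFormula (n + 1)) (val : Fin n → M) :
    EvalIn mem stp C (exF φ) val ↔
      ∃ x, C x ∧ EvalIn mem stp C φ (Fin.snoc val x) := by
  simp [StFormula.exF]

@[simp] lemma eval_singF {n} (s x : Fin n) (val : Fin n → M) :
    EvalIn mem stp C (singF s x) val ↔ SingIn mem C (val s) (val x) := by
  simp [StFormula.singF, SingIn]

@[simp] lemma eval_upairF {n} (p x y : Fin n) (val : Fin n → M) :
    EvalIn mem stp C (upairF p x y) val ↔ UPairIn mem C (val p) (val x) (val y) := by
  simp [StFormula.upairF, UPairIn]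

@[simp] lemma eval_opairF {n} (p x y : Fin n) (val : Fin n → M) :
    EvalIn mem stp C (opairF p x y) val ↔ OPairIn mem C (val p) (val x) (val y) := by
  simp [StFormula.opairF, OPairIn]

@[simp] lemma eval_pmemF {n} (f x y : Fin n) (val : Fin n → M) :
    EvalIn mem stp C (pmemF f x y) val ↔ FValIn mem C (val f) (val x) (val y) := by
  simp [StFormula.pmemF, FValIn]

end EvalLemmas

end HSTF

namespace HSTF

variable {M : Type u}

open StFormula

section Epsilon

@[simp] lemma eps_mem {n} (i j : Fin n) : (StFormula.mem i j).IsEpsilon := trivial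
@[simp] lemma eps_eq {n} (i j : Fin n) : (StFormula.eq i j).IsEpsilon := trivial
@[simp] lemma eps_not {n} (φ : StFormula n) :
    (StFormula.not φ).IsEpsilon ↔ φ.IsEpsilon := Iff.rfl
@[simp] lemma eps_and {n} (φ ψ : StFormula n) :
    (StFormula.and φ ψ).IsEpsilon ↔ φ.IsEpsilon ∧ ψ.IsEpsilon := Iff.rfl
@[simp] lemma eps_all {n} (φ : StFormula (n + 1)) :
    (StFormula.all φ).IsEpsilon ↔ φ.IsEpsilon := Iff.rfl
@[simp] lemma eps_orF {n} (φ ψ : StFormula n) :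
    (orF φ ψ).IsEpsilon ↔ φ.IsEpsilon ∧ ψ.IsEpsilon := Iff.rfl
@[simp] lemma eps_impF {n} (φ ψ : StFormula n) :
    (impF φ ψ).IsEpsilon ↔ φ.IsEpsilon ∧ ψ.IsEpsilon := Iff.rfl
@[simp] lemma eps_iffF {n} (φ ψ : StFormula n) :
    (iffF φ ψ).IsEpsilon ↔ (φ.IsEpsilon ∧ ψ.IsEpsilon) ∧ ψ.IsEpsilon ∧ φ.IsEpsilon :=
  Iff.rfl
@[simp] lemma eps_exF {n} (φ : StFormula (n + 1)) :
    (exF φ).IsEpsilon ↔ φ.IsEpsilon := Iff.rfl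
@[simp] lemma eps_singF {n} (s x : Fin n) : (singF s x).IsEpsilon := by
  simp [StFormula.singF]
@[simp] lemma eps_upairF {n} (p x y : Fin n) : (upairF p x y).IsEpsilon := by
  simp [StFormula.upairF]
@[simp] lemma eps_opairF {n} (p x y : Fin n) : (opairF p x y).IsEpsilon := by
  simp [StFormula.opairF]
@[simp] lemma eps_pmemF {n} (f x y : Fin n) : (pmemF f x y).IsEpsilon := by
  simp [StFormula.pmemF]

end Epsilon

section Meta

variable {mem : M → M → Prop} {stP : M → Prop}

lemma forall_snoc_pred {n} {P : M → Prop} {val : Fin n → M} (hval : ∀ i, P (val i))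
    {x : M} (hx : P x) : ∀ i, P ((Fin.snoc val x : Fin (n+1) → M) i) := by
  intro i
  simp only [Fin.snoc]
  split
  · simpa using hval _
  · simpa using hx

lemma eval_st_irrel (mem : M → M → Prop) (st1 st2 C : M → Prop) :
    ∀ {n} (φ : StFormula n), φ.IsEpsilon → ∀ val : Fin n → M,
      (EvalIn mem st1 C φ val ↔ EvalIn mem st2 C φ val)
  | _, .mem i j, _, _ => Iff.rfl
  | _, .eq i j, _, _ => Iff.rfl
  | _, .st i, h, _ => h.elim
  | _, .not φ, h, val => by
      simpa using not_congr (eval_st_irrel mem st1 st2 C φ h val)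
  | _, .and φ ψ, h, val => by
      simpa using and_congr (eval_st_irrel mem st1 st2 C φ h.1 val)
        (eval_st_irrel mem st1 st2 C ψ h.2 val)
  | _, .all φ, h, val => by
      simp only [eval_all]
      exact forall_congr' fun x => imp_congr Iff.rfl
        (eval_st_irrel mem st1 st2 C φ h (Fin.snoc val x))

/-- Standard sets are internal. -/
lemma std_internal (hH : HSTModel mem stP) {x : M} (hx : stP x) :
    Internal mem stP x := by
  obtain ⟨p, hp, hup⟩ := hH.zfc_st.pair x x hx hx
  exact ⟨p, hp, (hup x hx).2 (Or.inl rfl)⟩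

/-- Transfer: an ∈-formula with standard parameters holds relativized to the
standard universe iff it holds relativized to the internal universe. -/
lemma eval_transfer (hH : HSTModel mem stP) :
    ∀ {n} (φ : StFormula n), φ.IsEpsilon → ∀ val : Fin n → M, (∀ i, stP (val i)) →
      (EvalIn mem FalseC stP φ val ↔
       EvalIn mem FalseC (Internal mem stP) φ val)
  | _, .mem i j, _, _, _ => Iff.rfl
  | _, .eq i j, _, _, _ => Iff.rfl
  | _, .st i, h, _, _ => h.elim
  | _, .not φ, h, val, hval => by
      simpa using not_congr (eval_transfer hH φ h val hval)
  | _, .and φ ψ, h, val, hval => by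
      simpa using and_congr (eval_transfer hH φ h.1 val hval)
        (eval_transfer hH ψ h.2 val hval)
  | _, .all φ, h, val, hval => by
      simp only [eval_all]
      constructor
      · intro hst x hx
        by_contra hcon
        have h1 : ∃ x, Internal mem stP x ∧
            EvalIn mem FalseC (Internal mem stP) (.not φ) (Fin.snoc val x) :=
          ⟨x, hx, hcon⟩
        obtain ⟨y, hy, hny⟩ := (hH.transfer (.not φ) h val hval).1 h1
        exact hny ((eval_transfer hH φ h (Fin.snoc val y)
          (forall_snoc_pred hval hy)).1 (hst y hy))
      · intro hint x hx
        exact (eval_transfer hH φ h (Fin.snoc val x) (forall_snoc_pred hval hx)).2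
          (hint x (std_internal hH hx))

end Meta

section PairLemmas

variable {mem : M → M → Prop} {C : M → Prop}

/-- extensionality hypothesis for the class `C` -/
def CExt (mem : M → M → Prop) (C : M → Prop) : Prop :=
  ∀ x y, C x → C y → (∀ z, C z → (mem z x ↔ mem z y)) → x = y

lemma sing_unique (hext : CExt mem C) {s s' x : M} (hs : C s) (hs' : C s')
    (h : SingIn mem C s x) (h' : SingIn mem C s' x) : s = s' :=
  hext s s' hs hs' fun z hz => (h z hz).trans (h' z hz).symm

lemma upair_unique (hext : CExt mem C) {t t' x y : M} (ht : C t) (ht' : C t')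
    (h : UPairIn mem C t x y) (h' : UPairIn mem C t' x y) : t = t' :=
  hext t t' ht ht' fun z hz => (h z hz).trans (h' z hz).symm

lemma opair_unique (hext : CExt mem C) {p p' x y : M} (hp : C p) (hp' : C p')
    (h : OPairIn mem C p x y) (h' : OPairIn mem C p' x y) : p = p' := by
  obtain ⟨s, t, hs, ht, hsx, htxy, hpst⟩ := h
  obtain ⟨s', t', hs', ht', hsx', htxy', hpst'⟩ := h'
  have hss : s = s' := sing_unique hext hs hs' hsx hsx'
  have htt : t = t' := upair_unique hext ht ht' htxy htxy'
  subst hss; subst htt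
  exact upair_unique hext hp hp' hpst hpst'

lemma opair_inj (hext : CExt mem C) {p x y x' y' : M}
    (hx : C x) (hy : C y) (hx' : C x') (hy' : C y')
    (h : OPairIn mem C p x y) (h' : OPairIn mem C p x' y') : x = x' ∧ y = y' := by
  obtain ⟨s, t, hs, ht, hsx, htxy, hpst⟩ := h
  obtain ⟨s', t', hs', ht', hsx', htxy', hpst'⟩ := h'
  have hxs : mem x s := (hsx x hx).2 rfl
  have hxs' : mem x' s' := (hsx' x' hx').2 rfl
  have hxt : mem x t := (htxy x hx).2 (Or.inl rfl)
  have hyt : mem y t := (htxy y hy).2 (Or.inr rfl)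
  have hxt' : mem x' t' := (htxy' x' hx').2 (Or.inl rfl)
  have hyt' : mem y' t' := (htxy' y' hy').2 (Or.inr rfl)
  have hsp : mem s p := (hpst s hs).2 (Or.inl rfl)
  have htp : mem t p := (hpst t ht).2 (Or.inr rfl)
  have hsp' : mem s' p := (hpst' s' hs').2 (Or.inl rfl)
  have htp' : mem t' p := (hpst' t' ht').2 (Or.inr rfl)
  have hxx : x = x' := by
    rcases (hpst' s hs).1 hsp with hss' | hst'
    · -- s = s'
      subst hss'
      exact ((hsx' x hx).1 hxs).symm ▸ rfl
    · -- s = t'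
      have hxt'' : mem x t' := hst' ▸ hxs
      rcases (htxy' x hx).1 hxt'' with hxx' | hxy'
      · exact hxx'
      · -- x = y'
        rcases (hpst s' hs').1 hsp' with hs's | hs't
        · -- s' = s
          have : mem x' s := hs's ▸ hxs'
          exact ((hsx x' hx').1 this).symm
        · -- s' = t
          have : mem x s' := hs't ▸ hxt
          exact (hsx' x hx).1 this
  subst hxx
  refine ⟨rfl, ?_⟩
  rcases (hpst' t ht).1 htp with hts' | htt'
  · -- t = s'
    have hyx : y = x := (hsx' y hy).1 (hts' ▸ hyt)
    rcases (hpst t' ht').1 htp' with ht's | ht't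
    · -- t' = s
      have : y' = x := (hsx y' hy').1 (ht's ▸ hyt')
      rw [this, hyx]
    · -- t' = t
      have : mem y' t := ht't ▸ hyt'
      rcases (htxy y' hy').1 this with h1 | h1
      · rw [h1, hyx]
      · exact h1.symm
  · -- t = t'
    have : mem y t' := htt' ▸ hyt
    rcases (htxy' y hy).1 this with hyx' | hyy'
    · -- y = x
      have : mem y' t := htt' ▸ hyt'
      rcases (htxy y' hy').1 this with h1 | h1
      · rw [hyx', h1]
      · exact h1.symm
    · exact hyy'

end PairLemmas

end HSTF

namespace HSTF

variable {M : Type u}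

section Upgrades

variable {mem : M → M → Prop} {stP : M → Prop}

lemma trueC_ext (hH : HSTModel mem stP) : CExt mem (TrueC : M → Prop) :=
  fun x y _ _ h => hH.ext x y (fun z => h z trivial)

lemma sing_mono {C : M → Prop} {s x : M} (h : SingIn mem TrueC s x) :
    SingIn mem C s x := fun z _ => h z trivial

lemma upair_mono {C : M → Prop} {p x y : M} (h : UPairIn mem TrueC p x y) :
    UPairIn mem C p x y := fun z _ => h z trivial

lemma opair_down (hH : HSTModel mem stP) {p x y : M} (hp : Internal mem stP p)
    (h : OPairIn mem TrueC p x y) : OPairIn mem (Internal mem stP) p x y := by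
  obtain ⟨s, t, _, _, h1, h2, h3⟩ := h
  have hs : Internal mem stP s := hH.internal_trans p s hp ((h3 s trivial).2 (Or.inl rfl))
  have ht : Internal mem stP t := hH.internal_trans p t hp ((h3 t trivial).2 (Or.inr rfl))
  exact ⟨s, t, hs, ht, sing_mono h1, upair_mono h2, upair_mono h3⟩

lemma sing_up (hH : HSTModel mem stP) {s x : M} (hs : Internal mem stP s)
    (hx : Internal mem stP x) (h : SingIn mem (Internal mem stP) s x) :
    SingIn mem TrueC s x := fun z _ =>
  ⟨fun hz => (h z (hH.internal_trans s z hs hz)).1 hz,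
   fun hz => hz ▸ (h x hx).2 rfl⟩

lemma upair_up (hH : HSTModel mem stP) {t x y : M} (ht : Internal mem stP t)
    (hx : Internal mem stP x) (hy : Internal mem stP y)
    (h : UPairIn mem (Internal mem stP) t x y) : UPairIn mem TrueC t x y := by
  intro z _
  constructor
  · exact fun hz => (h z (hH.internal_trans t z ht hz)).1 hz
  · rintro (rfl | rfl)
    · exact (h z hx).2 (Or.inl rfl)
    · exact (h z hy).2 (Or.inr rfl)

lemma opair_up (hH : HSTModel mem stP) {p x y : M} (hp : Internal mem stP p)
    (hx : Internal mem stP x) (hy : Internal mem stP y)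
    (h : OPairIn mem (Internal mem stP) p x y) : OPairIn mem TrueC p x y := by
  obtain ⟨s, t, hs, ht, h1, h2, h3⟩ := h
  exact ⟨s, t, trivial, trivial, sing_up hH hs hx h1, upair_up hH ht hx hy h2,
    upair_up hH hp hs ht h3⟩

lemma fval_down (hH : HSTModel mem stP) {f x y : M} (hf : Internal mem stP f)
    (h : FValIn mem TrueC f x y) : FValIn mem (Internal mem stP) f x y := by
  obtain ⟨p, _, hpf, hop⟩ := h
  have hp : Internal mem stP p := hH.internal_trans f p hf hpf
  exact ⟨p, hp, hpf, opair_down hH hp hop⟩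

lemma fval_up (hH : HSTModel mem stP) {f x y : M}
    (hx : Internal mem stP x) (hy : Internal mem stP y)
    (h : FValIn mem (Internal mem stP) f x y) : FValIn mem TrueC f x y := by
  obtain ⟨p, hp, hpf, hop⟩ := h
  exact ⟨p, trivial, hpf, opair_up hH hp hx hy hop⟩

lemma fval_internal (hH : HSTModel mem stP) {f x y : M} (hf : Internal mem stP f)
    (h : FValIn mem TrueC f x y) :
    Internal mem stP x ∧ Internal mem stP y := by
  obtain ⟨p, _, hpf, s, t, _, _, h1, h2, h3⟩ := h
  have hp : Internal mem stP p := hH.internal_trans f p hf hpf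
  have ht : Internal mem stP t := hH.internal_trans p t hp ((h3 t trivial).2 (Or.inr rfl))
  exact ⟨hH.internal_trans t x ht ((h2 x trivial).2 (Or.inl rfl)),
    hH.internal_trans t y ht ((h2 y trivial).2 (Or.inr rfl))⟩

/-- existence of Kuratowski pairs in the full universe -/
lemma opair_exists (hH : HSTModel mem stP) (x y : M) :
    ∃ p, OPairIn mem TrueC p x y := by
  obtain ⟨s, hs⟩ := hH.pairing x x
  obtain ⟨t, ht⟩ := hH.pairing x y
  obtain ⟨p, hp⟩ := hH.pairing s t
  refine ⟨p, s, t, trivial, trivial, ?_, ht, hp⟩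
  intro z _
  rw [hs z trivial]
  exact ⟨fun h => h.elim id id, fun h => Or.inl h⟩

end Upgrades

end HSTF

namespace HSTF

variable {M : Type u}

open StFormula

/-! Semantic predicates (relative to a class `C`) and matching formulas -/

section Sems

variable (mem : M → M → Prop) (C : M → Prop)

/-- `f` is a function from `S` to `W`, relative to `C`. -/
def FunSem (f S W : M) : Prop :=
  (∀ p, C p → mem p f →
    ∃ a, C a ∧ (mem a S ∧ ∃ w, C w ∧ (mem w W ∧ OPairIn mem C p a w))) ∧
  (∀ a, C a → mem a S → ∃ w, C w ∧ (mem w W ∧ FValIn mem C f a w)) ∧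
  (∀ a, C a → ∀ w, C w → ∀ w', C w' →
    FValIn mem C f a w → FValIn mem C f a w' → w = w')

def WSem (T e W : M) : Prop :=
  ∀ z, C z → (mem z W ↔ (∃ y, C y ∧ (mem y T ∧ mem z y)) ∨ z = e)

def FSWSem (S W FSW : M) : Prop :=
  ∀ f, C f → (mem f FSW ↔ FunSem mem C f S W)

def OverSem (S W FSW : M) : Prop :=
  ∀ a, C a → mem a S → ∀ w, C w → mem w W → ∀ h, C h → mem h FSW →
    ∃ f, C f ∧ (mem f FSW ∧ (FValIn mem C f a w ∧
      ∀ b, C b → mem b S → ∀ v, C v → ¬ b = a →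
        (FValIn mem C h b v ↔ FValIn mem C f b v)))

def BSem (S W FSW : M) : Prop :=
  ∀ a, C a → mem a S → ∀ w, C w → mem w W →
    ∃ B, C B ∧ ∀ f, C f → (mem f B ↔ mem f FSW ∧ FValIn mem C f a w)

end Sems

namespace StFormula

/-- `f` is a function from `S` to `W` (formula). -/
def funF {n} (f S W : Fin n) : StFormula n :=
  .and
    (.all (impF (.mem (Fin.last n) f.castSucc)
      (exF (.and (.mem (Fin.last (n+1)) S.castSucc.castSucc)
        (exF (.and (.mem (Fin.last (n+2)) W.castSucc.castSucc.castSucc)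
          (opairF ((Fin.last n).castSucc.castSucc) ((Fin.last (n+1)).castSucc)
            (Fin.last (n+2)))))))))
    (.and
      (.all (impF (.mem (Fin.last n) S.castSucc)
        (exF (.and (.mem (Fin.last (n+1)) W.castSucc.castSucc)
          (pmemF f.castSucc.castSucc ((Fin.last n).castSucc) (Fin.last (n+1)))))))
      (.all (.all (.all (impF
        (pmemF f.castSucc.castSucc.castSucc ((Fin.last n).castSucc.castSucc)
          ((Fin.last (n+1)).castSucc))
        (impF
          (pmemF f.castSucc.castSucc.castSucc ((Fin.last n).castSucc.castSucc)
            (Fin.last (n+2)))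
          (.eq ((Fin.last (n+1)).castSucc) (Fin.last (n+2)))))))))

def thetaW : StFormula 3 :=
  .all (iffF (.mem (Fin.last 3) ((Fin.last 2).castSucc))
    (orF
      (exF (.and (.mem (Fin.last 4) ((Fin.last 0).castSucc.castSucc.castSucc.castSucc))
        (.mem ((Fin.last 3).castSucc) (Fin.last 4))))
      (.eq (Fin.last 3) ((Fin.last 1).castSucc.castSucc))))

def thetaFSW : StFormula 3 :=
  .all (iffF (.mem (Fin.last 3) ((Fin.last 2).castSucc))
    (funF (Fin.last 3) ((Fin.last 0).castSucc.castSucc.castSucc) ((Fin.last 1).castSucc.castSucc)))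

def thetaOver : StFormula 3 :=
  .all (impF (.mem (Fin.last 3) ((Fin.last 0).castSucc.castSucc.castSucc))
   (.all (impF (.mem (Fin.last 4) ((Fin.last 1).castSucc.castSucc.castSucc))
    (.all (impF (.mem (Fin.last 5) ((Fin.last 2).castSucc.castSucc.castSucc))
     (exF (.and (.mem (Fin.last 6) ((Fin.last 2).castSucc.castSucc.castSucc.castSucc))
      (.and (pmemF (Fin.last 6) ((Fin.last 3).castSucc.castSucc.castSucc)
          ((Fin.last 4).castSucc.castSucc))
       (.all (impF (.mem (Fin.last 7)
            ((Fin.last 0).castSucc.castSucc.castSucc.castSucc.castSucc.castSucc.castSucc))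
        (.all (impF (.not (.eq ((Fin.last 7).castSucc)
             ((Fin.last 3).castSucc.castSucc.castSucc.castSucc.castSucc)))
         (iffF
           (pmemF ((Fin.last 5).castSucc.castSucc.castSucc) ((Fin.last 7).castSucc)
             (Fin.last 8))
           (pmemF ((Fin.last 6).castSucc.castSucc) ((Fin.last 7).castSucc)
             (Fin.last 8)))))))))))))))

def thetaB : StFormula 3 :=
  .all (impF (.mem (Fin.last 3) ((Fin.last 0).castSucc.castSucc.castSucc))
   (.all (impF (.mem (Fin.last 4) ((Fin.last 1).castSucc.castSucc.castSucc))
    (exF (.all (iffF (.mem (Fin.last 6) ((Fin.last 5).castSucc))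
      (.and (.mem (Fin.last 6) ((Fin.last 2).castSucc.castSucc.castSucc.castSucc))
        (pmemF (Fin.last 6) ((Fin.last 3).castSucc.castSucc.castSucc)
          ((Fin.last 4).castSucc.castSucc)))))))))

end StFormula


/-- parameter vectors in `snoc` form, so that evaluation reduces by `simp` -/
def vec1 (a : M) : Fin 1 → M := Fin.snoc (Fin.elim0) a
def vec2 (a b : M) : Fin 2 → M := Fin.snoc (vec1 a) b
def vec3 (a b c : M) : Fin 3 → M := Fin.snoc (vec2 a b) c


@[simp] lemma snoc_zero_eval {n} (val : Fin (n + 1) → M) (x : M) :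
    (Fin.snoc val x : Fin (n + 2) → M) 0 = val 0 := by
  simpa using Fin.snoc_castSucc (α := fun _ => M) (p := val) (x := x) (i := 0)

@[simp] lemma snoc_elim0_eval (x : M) :
    (Fin.snoc (Fin.elim0) x : Fin 1 → M) 0 = x := by
  have := Fin.snoc_last (α := fun _ => M) (p := Fin.elim0) (x := x)
  simpa using this

section Bridges

variable {mem : M → M → Prop} {stp C : M → Prop}

@[simp] lemma eval_funF {n} (f S W : Fin n) (val : Fin n → M) :
    EvalIn mem stp C (funF f S W) val ↔ FunSem mem C (val f) (val S) (val W) := by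
  simp [StFormula.funF, FunSem]

lemma eval_thetaW (T e W : M) :
    EvalIn mem stp C thetaW (vec3 T e W) ↔ WSem mem C T e W := by
  simp [StFormula.thetaW, vec3, vec2, vec1, WSem, Fin.snoc]

lemma eval_thetaFSW (S W FSW : M) :
    EvalIn mem stp C thetaFSW (vec3 S W FSW) ↔ FSWSem mem C S W FSW := by
  simp [StFormula.thetaFSW, vec3, vec2, vec1, FSWSem, Fin.snoc]

lemma eval_thetaOver (S W FSW : M) :
    EvalIn mem stp C thetaOver (vec3 S W FSW) ↔ OverSem mem C S W FSW := by
  simp [StFormula.thetaOver, vec3, vec2, vec1, OverSem, Fin.snoc]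

lemma eval_thetaB (S W FSW : M) :
    EvalIn mem stp C thetaB (vec3 S W FSW) ↔ BSem mem C S W FSW := by
  simp [StFormula.thetaB, vec3, vec2, vec1, BSem, Fin.snoc]

end Bridges

end HSTF

namespace HSTF

variable {M : Type u}

open StFormula

namespace StFormula

/-- `z ∈ x ∧ False` (for carving out the empty set). -/
def falseF : StFormula 1 := .not (.eq (Fin.last 0) (Fin.last 0))

/-- `p` is a pair `⟨a, w⟩` with `a ∈ S`, `w ∈ W`; free: `S, W, p`. -/
def swF : StFormula 3 :=
  exF (.and (.mem (Fin.last 3) ((Fin.last 0).castSucc.castSucc.castSucc))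
    (exF (.and (.mem (Fin.last 4) ((Fin.last 1).castSucc.castSucc.castSucc))
      (opairF ((Fin.last 2).castSucc.castSucc) ((Fin.last 3).castSucc)
        (Fin.last 4)))))

/-- `p = ⟨a, e⟩` for some `a ∈ S`; free: `S, e, p`. -/
def f0F : StFormula 3 :=
  exF (.and (.mem (Fin.last 3) ((Fin.last 0).castSucc.castSucc.castSucc))
    (opairF ((Fin.last 2).castSucc) (Fin.last 3)
      ((Fin.last 1).castSucc.castSucc)))

/-- `p = ⟨a, w⟩ ∨ (p ∈ h ∧ ¬ ∃ v, p = ⟨a, v⟩)`; free: `a, w, h, p`. -/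
def ovF : StFormula 4 :=
  orF (opairF (Fin.last 3) ((Fin.last 0).castSucc.castSucc.castSucc)
        ((Fin.last 1).castSucc.castSucc))
    (.and (.mem (Fin.last 3) ((Fin.last 2).castSucc))
      (.not (exF (opairF ((Fin.last 3).castSucc)
        ((Fin.last 0).castSucc.castSucc.castSucc.castSucc) (Fin.last 4)))))

/-- `⟨a, w⟩ ∈ f`; free: `a, w, f`. -/
def bF : StFormula 3 :=
  pmemF (Fin.last 2) ((Fin.last 0).castSucc.castSucc) ((Fin.last 1).castSucc)

end StFormula

section Bridges2

variable {mem : M → M → Prop} {stp C : M → Prop}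

@[simp] lemma eps_funF {n} (f S W : Fin n) : (funF f S W).IsEpsilon := by
  simp [StFormula.funF]
@[simp] lemma eps_thetaW : (thetaW : StFormula 3).IsEpsilon := by
  simp [StFormula.thetaW]
@[simp] lemma eps_thetaFSW : (thetaFSW : StFormula 3).IsEpsilon := by
  simp [StFormula.thetaFSW]
@[simp] lemma eps_thetaOver : (thetaOver : StFormula 3).IsEpsilon := by
  simp [StFormula.thetaOver]
@[simp] lemma eps_thetaB : (thetaB : StFormula 3).IsEpsilon := by
  simp [StFormula.thetaB]
@[simp] lemma eps_falseF : (falseF : StFormula 1).IsEpsilon := by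
  simp [StFormula.falseF]
@[simp] lemma eps_swF : (swF : StFormula 3).IsEpsilon := by simp [StFormula.swF]
@[simp] lemma eps_f0F : (f0F : StFormula 3).IsEpsilon := by simp [StFormula.f0F]
@[simp] lemma eps_ovF : (ovF : StFormula 4).IsEpsilon := by simp [StFormula.ovF]
@[simp] lemma eps_bF : (bF : StFormula 3).IsEpsilon := by simp [StFormula.bF]

lemma eval_falseF (z : M) :
    EvalIn mem stp C falseF (Fin.snoc Fin.elim0 z) ↔ False := by
  simp [StFormula.falseF]

lemma eval_swF (S W p : M) :
    EvalIn mem stp C swF (Fin.snoc (vec2 S W) p) ↔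
      ∃ a, C a ∧ (mem a S ∧ ∃ w, C w ∧ (mem w W ∧ OPairIn mem C p a w)) := by
  simp [StFormula.swF, vec2, vec1, Fin.snoc]

lemma eval_f0F (S e p : M) :
    EvalIn mem stp C f0F (Fin.snoc (vec2 S e) p) ↔
      ∃ a, C a ∧ (mem a S ∧ OPairIn mem C p a e) := by
  simp [StFormula.f0F, vec2, vec1, Fin.snoc]

lemma eval_ovF (a w h p : M) :
    EvalIn mem stp C ovF (Fin.snoc (vec3 a w h) p) ↔
      (OPairIn mem C p a w ∨
        (mem p h ∧ ¬ ∃ v, C v ∧ OPairIn mem C p a v)) := by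
  simp [StFormula.ovF, vec3, vec2, vec1, Fin.snoc]

lemma eval_bF (a w f : M) :
    EvalIn mem stp C bF (Fin.snoc (vec2 a w) f) ↔ FValIn mem C f a w := by
  simp [StFormula.bF, vec2, vec1, Fin.snoc]

lemma vec1_pred {P : M → Prop} {a : M} (ha : P a) : ∀ i, P (vec1 a i) :=
  forall_snoc_pred (fun i => i.elim0) ha

lemma vec2_pred {P : M → Prop} {a b : M} (ha : P a) (hb : P b) :
    ∀ i, P (vec2 a b i) := forall_snoc_pred (vec1_pred ha) hb

lemma vec3_pred {P : M → Prop} {a b c : M} (ha : P a) (hb : P b) (hc : P c) :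
    ∀ i, P (vec3 a b c i) := forall_snoc_pred (vec2_pred ha hb) hc

end Bridges2

section Transfers

variable {mem : M → M → Prop} {stP : M → Prop}

lemma wsem_transfer (hH : HSTModel mem stP) {T e W : M}
    (hT : stP T) (he : stP e) (hW : stP W) (h : WSem mem stP T e W) :
    WSem mem (Internal mem stP) T e W :=
  (eval_thetaW T e W).1 <|
    (eval_transfer hH thetaW eps_thetaW _ (vec3_pred hT he hW)).1 <|
      (eval_thetaW T e W).2 h

lemma fswsem_transfer (hH : HSTModel mem stP) {S W FSW : M}
    (hS : stP S) (hW : stP W) (hF : stP FSW) (h : FSWSem mem stP S W FSW) :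
    FSWSem mem (Internal mem stP) S W FSW :=
  (eval_thetaFSW S W FSW).1 <|
    (eval_transfer hH thetaFSW eps_thetaFSW _ (vec3_pred hS hW hF)).1 <|
      (eval_thetaFSW S W FSW).2 h

lemma oversem_transfer (hH : HSTModel mem stP) {S W FSW : M}
    (hS : stP S) (hW : stP W) (hF : stP FSW) (h : OverSem mem stP S W FSW) :
    OverSem mem (Internal mem stP) S W FSW :=
  (eval_thetaOver S W FSW).1 <|
    (eval_transfer hH thetaOver eps_thetaOver _ (vec3_pred hS hW hF)).1 <|
      (eval_thetaOver S W FSW).2 h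

lemma bsem_transfer (hH : HSTModel mem stP) {S W FSW : M}
    (hS : stP S) (hW : stP W) (hF : stP FSW) (h : BSem mem stP S W FSW) :
    BSem mem (Internal mem stP) S W FSW :=
  (eval_thetaB S W FSW).1 <|
    (eval_transfer hH thetaB eps_thetaB _ (vec3_pred hS hW hF)).1 <|
      (eval_thetaB S W FSW).2 h

end Transfers

end HSTF

namespace HSTF

variable {M : Type u}

open StFormula

section STStage

variable {mem : M → M → Prop} {stP : M → Prop}

/-- the formula for separating `FSW` out of `P3`; free: `S, W, f`. -/
def fswF : StFormula 3 :=
  funF (Fin.last 2) ((Fin.last 0).castSucc.castSucc) ((Fin.last 1).castSucc)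

@[simp] lemma eps_fswF : (fswF : StFormula 3).IsEpsilon := by simp [fswF]

lemma eval_fswF {stp C : M → Prop} (S W f : M) :
    EvalIn mem stp C fswF (Fin.snoc (vec2 S W) f) ↔ FunSem mem C f S W := by
  simp [fswF, vec2, vec1, Fin.snoc]

lemma opair_st (hZ : ZFCModelIn mem stP) {x y : M} (hx : stP x) (hy : stP y) :
    ∃ p, stP p ∧ OPairIn mem stP p x y := by
  obtain ⟨s, hs, hsu⟩ := hZ.pair x x hx hx
  obtain ⟨t, ht, htu⟩ := hZ.pair x y hx hy
  obtain ⟨p, hp, hpu⟩ := hZ.pair s t hs ht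
  refine ⟨p, hp, s, t, hs, ht, ?_, htu, hpu⟩
  intro z hz
  rw [hsu z hz]
  exact ⟨fun h => h.elim id id, fun h => Or.inl h⟩

theorem st_stage (hH : HSTModel mem stP) {S T : M} (hS : stP S) (hT : stP T) :
    ∃ W FSW f0, stP W ∧ stP FSW ∧ stP f0 ∧ mem f0 FSW ∧
      WSem mem (Internal mem stP) T S W ∧
      FSWSem mem (Internal mem stP) S W FSW ∧
      OverSem mem (Internal mem stP) S W FSW ∧
      BSem mem (Internal mem stP) S W FSW := by
  have hZ := hH.zfc_st
  have hext : CExt mem stP := hZ.ext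
  -- W := (⋃ T) ∪ {S}
  obtain ⟨U, hU, hUc⟩ := hZ.union T hT
  obtain ⟨se, hse, hsec⟩ := hZ.pair S S hS hS
  obtain ⟨pw, hpw, hpwc⟩ := hZ.pair U se hU hse
  obtain ⟨W, hW, hWc⟩ := hZ.union pw hpw
  have hWchar : WSem mem stP T S W := by
    intro z hz
    rw [hWc z hz]
    constructor
    · rintro ⟨y, hy, hypw, hzy⟩
      rcases (hpwc y hy).1 hypw with rfl | rfl
      · exact Or.inl ((hUc z hz).1 hzy)
      · exact Or.inr ((hsec z hz).1 hzy |>.elim id id)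
    · rintro (⟨y, hy, hyT, hzy⟩ | rfl)
      · exact ⟨U, hU, (hpwc U hU).2 (Or.inl rfl), (hUc z hz).2 ⟨y, hy, hyT, hzy⟩⟩
      · exact ⟨se, hse, (hpwc se hse).2 (Or.inr rfl), (hsec z hz).2 (Or.inl rfl)⟩
  have hSmemW : mem S W := (hWchar S hS).2 (Or.inr rfl)
  -- S ∪ W and power sets
  obtain ⟨psw, hpsw, hpswc⟩ := hZ.pair S W hS hW
  obtain ⟨SuW, hSuW, hSuWc⟩ := hZ.union psw hpsw
  have hSuWchar : ∀ z, stP z → (mem z S ∨ mem z W) → mem z SuW := by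
    intro z hz hzw
    rcases hzw with h | h
    · exact (hSuWc z hz).2 ⟨S, hS, (hpswc S hS).2 (Or.inl rfl), h⟩
    · exact (hSuWc z hz).2 ⟨W, hW, (hpswc W hW).2 (Or.inr rfl), h⟩
  obtain ⟨P1, hP1, hP1c⟩ := hZ.power SuW hSuW
  obtain ⟨P2, hP2, hP2c⟩ := hZ.power P1 hP1
  obtain ⟨P3, hP3, hP3c⟩ := hZ.power P2 hP2
  have pairP2 : ∀ p a w, stP p → stP a → stP w → mem a S → mem w W →
      OPairIn mem stP p a w → mem p P2 := by
    rintro p a w hp ha hw haS hwW ⟨s, t, hs, ht, hsing, hupair, hpair⟩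
    have hsP1 : mem s P1 := by
      refine (hP1c s hs).2 ?_
      intro z hz hzs
      rcases (hsing z hz).1 hzs with rfl
      exact hSuWchar z hz (Or.inl haS)
    have htP1 : mem t P1 := by
      refine (hP1c t ht).2 ?_
      intro z hz hzt
      rcases (hupair z hz).1 hzt with rfl | rfl
      · exact hSuWchar z hz (Or.inl haS)
      · exact hSuWchar z hz (Or.inr hwW)
    refine (hP2c p hp).2 ?_
    intro z hz hzp
    rcases (hpair z hz).1 hzp with rfl | rfl
    · exact hsP1
    · exact htP1
  -- SW := S × W
  obtain ⟨SW, hSW, hSWc⟩ :=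
    hZ.separation swF eps_swF (vec2 S W) (vec2_pred hS hW) P2 hP2
  have hSW_of_pair : ∀ p a w, stP p → stP a → stP w → mem a S → mem w W →
      OPairIn mem stP p a w → mem p SW := by
    intro p a w hp ha hw haS hwW hop
    exact (hSWc p hp).2 ⟨pairP2 p a w hp ha hw haS hwW hop,
      (eval_swF S W p).2 ⟨a, ha, haS, w, hw, hwW, hop⟩⟩
  have hSW_pairs : ∀ p, stP p → mem p SW →
      ∃ a, stP a ∧ (mem a S ∧ ∃ w, stP w ∧ (mem w W ∧ OPairIn mem stP p a w)) := by
    intro p hp hpSW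
    exact (eval_swF S W p).1 ((hSWc p hp).1 hpSW).2
  -- FSW
  obtain ⟨FSW, hFSW, hFSWc⟩ :=
    hZ.separation fswF eps_fswF (vec2 S W) (vec2_pred hS hW) P3 hP3
  have hFunBound : ∀ f, stP f → FunSem mem stP f S W → mem f P3 := by
    intro f hf hfun
    refine (hP3c f hf).2 ?_
    intro p hp hpf
    obtain ⟨a, ha, haS, w, hw, hwW, hop⟩ := hfun.1 p hp hpf
    exact pairP2 p a w hp ha hw haS hwW hop
  have hFSWchar : FSWSem mem stP S W FSW := by
    intro f hf
    constructor
    · intro hfFSW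
      exact (eval_fswF S W f).1 ((hFSWc f hf).1 hfFSW).2
    · intro hfun
      exact (hFSWc f hf).2 ⟨hFunBound f hf hfun, (eval_fswF S W f).2 hfun⟩
  -- f0 := S × {S}
  obtain ⟨f0, hf0st, hf0c⟩ :=
    hZ.separation f0F eps_f0F (vec2 S S) (vec2_pred hS hS) SW hSW
  have hf0fun : FunSem mem stP f0 S W := by
    refine ⟨?_, ?_, ?_⟩
    · intro p hp hpf0
      obtain ⟨a, ha, haS, hop⟩ := (eval_f0F S S p).1 ((hf0c p hp).1 hpf0).2
      exact ⟨a, ha, haS, S, hS, hSmemW, hop⟩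
    · intro a ha haS
      obtain ⟨p, hp, hopp⟩ := opair_st hZ ha hS
      have hpf0 : mem p f0 := (hf0c p hp).2
        ⟨hSW_of_pair p a S hp ha hS haS hSmemW hopp, (eval_f0F S S p).2 ⟨a, ha, haS, hopp⟩⟩
      exact ⟨S, hS, hSmemW, p, hp, hpf0, hopp⟩
    · rintro a ha w hw w' hw' ⟨p, hp, hpf0, hop⟩ ⟨p', hp', hp'f0, hop'⟩
      obtain ⟨a1, ha1, _, hop1⟩ := (eval_f0F S S p).1 ((hf0c p hp).1 hpf0).2
      obtain ⟨a2, ha2, _, hop2⟩ := (eval_f0F S S p').1 ((hf0c p' hp').1 hp'f0).2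
      have h1 := opair_inj hext ha hw ha1 hS hop hop1
      have h2 := opair_inj hext ha hw' ha2 hS hop' hop2
      rw [h1.2, h2.2]
  have hf0mem : mem f0 FSW := (hFSWchar f0 hf0st).2 hf0fun
  -- override functions
  have hover : OverSem mem stP S W FSW := by
    intro a ha haS w hw hwW h hh hhFSW
    have hhfun := (hFSWchar h hh).1 hhFSW
    obtain ⟨f, hfst, hfc⟩ :=
      hZ.separation ovF eps_ovF (vec3 a w h) (vec3_pred ha hw hh) SW hSW
    have hchar : ∀ p, stP p → (mem p f ↔ mem p SW ∧
        (OPairIn mem stP p a w ∨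
          (mem p h ∧ ¬ ∃ v, stP v ∧ OPairIn mem stP p a v))) := by
      intro p hp
      rw [hfc p hp, eval_ovF]
    obtain ⟨paw, hpaw, hoppaw⟩ := opair_st hZ ha hw
    have hpawf : mem paw f := (hchar paw hpaw).2
      ⟨hSW_of_pair paw a w hpaw ha hw haS hwW hoppaw, Or.inl hoppaw⟩
    have hfaw : FValIn mem stP f a w := ⟨paw, hpaw, hpawf, hoppaw⟩
    have hffun : FunSem mem stP f S W := by
      refine ⟨?_, ?_, ?_⟩
      · intro p hp hpf
        exact hSW_pairs p hp ((hchar p hp).1 hpf).1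
      · intro b hb hbS
        by_cases hba : b = a
        · subst hba
          exact ⟨w, hw, hwW, hfaw⟩
        · obtain ⟨v, hv, hvW, p1, hp1, hp1h, hop1⟩ := hhfun.2.1 b hb hbS
          have hp1f : mem p1 f := (hchar p1 hp1).2
            ⟨hSW_of_pair p1 b v hp1 hb hv hbS hvW hop1,
             Or.inr ⟨hp1h, fun ⟨v', hv', hop'⟩ =>
               hba (opair_inj hext hb hv ha hv' hop1 hop').1⟩⟩
          exact ⟨v, hv, hvW, p1, hp1, hp1f, hop1⟩
      · rintro a1 ha1 w1 hw1 w2 hw2 ⟨p1, hp1, hp1f, hop1⟩ ⟨p2, hp2, hp2f, hop2⟩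
        rcases ((hchar p1 hp1).1 hp1f).2 with hA1 | ⟨hB1, hno1⟩
        · rcases ((hchar p2 hp2).1 hp2f).2 with hA2 | ⟨hB2, hno2⟩
          · have e1 := opair_inj hext ha1 hw1 ha hw hop1 hA1
            have e2 := opair_inj hext ha1 hw2 ha hw hop2 hA2
            rw [e1.2, e2.2]
          · exfalso
            have e1 := opair_inj hext ha1 hw1 ha hw hop1 hA1
            exact hno2 ⟨w2, hw2, e1.1 ▸ hop2⟩
        · rcases ((hchar p2 hp2).1 hp2f).2 with hA2 | ⟨hB2, hno2⟩
          · exfalso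
            have e2 := opair_inj hext ha1 hw2 ha hw hop2 hA2
            exact hno1 ⟨w1, hw1, e2.1 ▸ hop1⟩
          · exact hhfun.2.2 a1 ha1 w1 hw1 w2 hw2 ⟨p1, hp1, hB1, hop1⟩ ⟨p2, hp2, hB2, hop2⟩
    refine ⟨f, hfst, (hFSWchar f hfst).2 hffun, hfaw, ?_⟩
    intro b hb hbS v hv hba
    constructor
    · rintro ⟨p1, hp1, hp1h, hop1⟩
      obtain ⟨a2, ha2, ha2S, w2, hw2, hw2W, hop2⟩ := hhfun.1 p1 hp1 hp1h
      have e := opair_inj hext hb hv ha2 hw2 hop1 hop2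
      have hvW : mem v W := by rw [e.2]; exact hw2W
      have hp1f : mem p1 f := (hchar p1 hp1).2
        ⟨hSW_of_pair p1 b v hp1 hb hv hbS hvW hop1,
         Or.inr ⟨hp1h, fun ⟨v', hv', hop'⟩ =>
           hba (opair_inj hext hb hv ha hv' hop1 hop').1⟩⟩
      exact ⟨p1, hp1, hp1f, hop1⟩
    · rintro ⟨p1, hp1, hp1f, hop1⟩
      rcases ((hchar p1 hp1).1 hp1f).2 with hA | ⟨hB, _⟩
      · exact absurd (opair_inj hext hb hv ha hw hop1 hA).1 hba
      · exact ⟨p1, hp1, hB, hop1⟩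
  -- B-sets
  have hbsem : BSem mem stP S W FSW := by
    intro a ha haS w hw hwW
    obtain ⟨B, hB, hBc⟩ :=
      hZ.separation bF eps_bF (vec2 a w) (vec2_pred ha hw) FSW hFSW
    refine ⟨B, hB, fun f hf => ?_⟩
    rw [hBc f hf, eval_bF]
  exact ⟨W, FSW, f0, hW, hFSW, hf0st, hf0mem,
    wsem_transfer hH hT hS hW hWchar,
    fswsem_transfer hH hS hW hFSW hFSWchar,
    oversem_transfer hH hS hW hFSW hover,
    bsem_transfer hH hS hW hFSW hbsem⟩

end STStage

end HSTF

namespace HSTF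

variable {M : Type u}

open StFormula

namespace StFormula

/-- `st z`; for separating `σS` out of `S`. -/
def sigF : StFormula 1 := .st (Fin.last 0)

/-- collection formula: `st s ∧ ∃ z ∈ s ∃ y (F(a) = y ∧ z ∈ y)`; free: `F, a, s`. -/
def colF : StFormula 3 :=
  .and (.st (Fin.last 2))
    (exF
      (.and (.mem (Fin.last 3) ((Fin.last 2).castSucc))
        (exF
          (.and (pmemF ((Fin.last 0).castSucc.castSucc.castSucc.castSucc)
              ((Fin.last 1).castSucc.castSucc.castSucc) (Fin.last 4))
            (.mem ((Fin.last 3).castSucc) (Fin.last 4))))))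

/-- `q = ⟨x, z⟩ ∧ ∃ y (F(x) = y ∧ z ∈ y)`; free: `F, x, z, q`. -/
def dF : StFormula 4 :=
  .and (opairF (Fin.last 3) ((Fin.last 1).castSucc.castSucc) ((Fin.last 2).castSucc))
    (exF
      (.and (pmemF ((Fin.last 0).castSucc.castSucc.castSucc.castSucc)
          ((Fin.last 1).castSucc.castSucc.castSucc) (Fin.last 4))
        (.mem ((Fin.last 2).castSucc.castSucc) (Fin.last 4))))

/-- `b = D_a`; free: `F, W, a, b`. -/
def x1F : StFormula 4 :=
  .all
    (iffF (.mem (Fin.last 4) ((Fin.last 3).castSucc))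
      (exF
        (.and (.mem (Fin.last 5) ((Fin.last 1).castSucc.castSucc.castSucc.castSucc))
          (.and (opairF ((Fin.last 4).castSucc)
              ((Fin.last 2).castSucc.castSucc.castSucc) (Fin.last 5))
            (exF
              (.and (pmemF
                  ((Fin.last 0).castSucc.castSucc.castSucc.castSucc.castSucc.castSucc)
                  ((Fin.last 2).castSucc.castSucc.castSucc.castSucc) (Fin.last 6))
                (.mem ((Fin.last 5).castSucc) (Fin.last 6))))))))

/-- `c = ⟨a, D_a⟩`; free: `F, W, a, c`. -/
def h1F : StFormula 4 :=
  exF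
    (.and
      (.all
        (iffF (.mem (Fin.last 5) ((Fin.last 4).castSucc))
          (exF
            (.and (.mem (Fin.last 6)
                ((Fin.last 1).castSucc.castSucc.castSucc.castSucc.castSucc))
              (.and (opairF ((Fin.last 5).castSucc)
                  ((Fin.last 2).castSucc.castSucc.castSucc.castSucc) (Fin.last 6))
                (exF
                  (.and (pmemF
                      ((Fin.last 0).castSucc.castSucc.castSucc.castSucc.castSucc.castSucc.castSucc)
                      ((Fin.last 2).castSucc.castSucc.castSucc.castSucc.castSucc)
                      (Fin.last 7))
                    (.mem ((Fin.last 6).castSucc) (Fin.last 7)))))))))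
      (opairF ((Fin.last 3).castSucc) ((Fin.last 2).castSucc.castSucc) (Fin.last 4)))

/-- `c(D) = q`; free: `c, D, q`. -/
def gF : StFormula 3 :=
  pmemF ((Fin.last 0).castSucc.castSucc) ((Fin.last 1).castSucc) (Fin.last 2)

/-- `B = B_a`; free: `g, FSW, a, B`. -/
def xF : StFormula 4 :=
  .all
    (iffF (.mem (Fin.last 4) ((Fin.last 3).castSucc))
      (.and (.mem (Fin.last 4) ((Fin.last 1).castSucc.castSucc.castSucc))
        (exF
          (.and (pmemF ((Fin.last 0).castSucc.castSucc.castSucc.castSucc.castSucc)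
              ((Fin.last 2).castSucc.castSucc.castSucc) (Fin.last 5))
            (pmemF ((Fin.last 4).castSucc)
              ((Fin.last 2).castSucc.castSucc.castSucc) (Fin.last 5))))))

/-- `c = ⟨a, B_a⟩`; free: `g, FSW, a, c`. -/
def hxF : StFormula 4 :=
  exF
    (.and
      (.all
        (iffF (.mem (Fin.last 5) ((Fin.last 4).castSucc))
          (.and (.mem (Fin.last 5) ((Fin.last 1).castSucc.castSucc.castSucc.castSucc))
            (exF
              (.and (pmemF
                  ((Fin.last 0).castSucc.castSucc.castSucc.castSucc.castSucc.castSucc)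
                  ((Fin.last 2).castSucc.castSucc.castSucc.castSucc) (Fin.last 6))
                (pmemF ((Fin.last 5).castSucc)
                  ((Fin.last 2).castSucc.castSucc.castSucc.castSucc) (Fin.last 6)))))))
      (opairF ((Fin.last 3).castSucc) ((Fin.last 2).castSucc.castSucc) (Fin.last 4)))

/-- `k` is "bad"; free: `X', eb, FSW, k`. -/
def kF : StFormula 4 :=
  .not (exF
    (.and (.mem (Fin.last 4) ((Fin.last 2).castSucc.castSucc))
      (.all
        (impF (.mem (Fin.last 5)
            ((Fin.last 0).castSucc.castSucc.castSucc.castSucc.castSucc))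
          (.all
            (impF (pmemF ((Fin.last 1).castSucc.castSucc.castSucc.castSucc.castSucc)
                ((Fin.last 5).castSucc) (Fin.last 6))
              (impF (.mem (Fin.last 6) ((Fin.last 3).castSucc.castSucc.castSucc))
                (.mem ((Fin.last 4).castSucc.castSucc) ((Fin.last 5).castSucc)))))))))

end StFormula

section Bridges3

variable {mem : M → M → Prop} {stP : M → Prop}

@[simp] lemma trueC_iff (x : M) : (TrueC x) ↔ True := Iff.rfl

lemma eval_sigF (z : M) :
    EvalIn mem stP TrueC sigF (Fin.snoc Fin.elim0 z) ↔ stP z := by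
  simp [StFormula.sigF]

lemma eval_colF (F a s : M) :
    EvalIn mem stP TrueC colF (Fin.snoc (Fin.snoc (vec1 F) a) s) ↔
      stP s ∧ ∃ z, mem z s ∧ ∃ y, FValIn mem TrueC F a y ∧ mem z y := by
  simp [StFormula.colF, vec1, TrueC, Fin.snoc]

lemma eval_dF (F x z q : M) :
    EvalIn mem stP TrueC dF (Fin.snoc (Fin.snoc (vec2 F x) z) q) ↔
      OPairIn mem TrueC q x z ∧ ∃ y, FValIn mem TrueC F x y ∧ mem z y := by
  simp [StFormula.dF, vec2, vec1, TrueC, Fin.snoc]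

lemma eval_x1F (F W a b : M) :
    EvalIn mem stP TrueC x1F (Fin.snoc (Fin.snoc (vec2 F W) a) b) ↔
      ∀ q, mem q b ↔ ∃ z, mem z W ∧ OPairIn mem TrueC q a z ∧
        ∃ y, FValIn mem TrueC F a y ∧ mem z y := by
  simp [StFormula.x1F, vec2, vec1, TrueC, Fin.snoc]

lemma eval_h1F (F W a c : M) :
    EvalIn mem stP TrueC h1F (Fin.snoc (Fin.snoc (vec2 F W) a) c) ↔
      ∃ b, (∀ q, mem q b ↔ ∃ z, mem z W ∧ OPairIn mem TrueC q a z ∧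
          ∃ y, FValIn mem TrueC F a y ∧ mem z y) ∧ OPairIn mem TrueC c a b := by
  simp [StFormula.h1F, vec2, vec1, TrueC, Fin.snoc]

lemma eval_gF (c D q : M) :
    EvalIn mem stP TrueC gF (Fin.snoc (Fin.snoc (vec1 c) D) q) ↔
      FValIn mem TrueC c D q := by
  simp [StFormula.gF, vec1, TrueC, Fin.snoc]

lemma eval_xF (g FSW a B : M) :
    EvalIn mem stP TrueC xF (Fin.snoc (Fin.snoc (vec2 g FSW) a) B) ↔
      ∀ f, mem f B ↔ (mem f FSW ∧ ∃ z, FValIn mem TrueC g a z ∧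
        FValIn mem TrueC f a z) := by
  simp [StFormula.xF, vec2, vec1, TrueC, Fin.snoc]

lemma eval_hxF (g FSW a c : M) :
    EvalIn mem stP TrueC hxF (Fin.snoc (Fin.snoc (vec2 g FSW) a) c) ↔
      ∃ B, (∀ f, mem f B ↔ (mem f FSW ∧ ∃ z, FValIn mem TrueC g a z ∧
          FValIn mem TrueC f a z)) ∧ OPairIn mem TrueC c a B := by
  simp [StFormula.hxF, vec2, vec1, TrueC, Fin.snoc]

lemma eval_kF (X' eb FSW k : M) :
    EvalIn mem stP TrueC kF (Fin.snoc (vec3 X' eb FSW) k) ↔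
      ¬ ∃ h, mem h FSW ∧ ∀ Y, mem Y X' → ∀ j, FValIn mem TrueC eb Y j →
        mem j k → mem h Y := by
  simp [StFormula.kF, vec3, vec2, vec1, TrueC, Fin.snoc]

end Bridges3

end HSTF

namespace HSTF

variable {M : Type u}

section Final

variable {mem : M → M → Prop} {stP : M → Prop}

lemma funsem_to_funcon (hH : HSTModel mem stP) {f S W : M} (hS : stP S)
    (hf : Internal mem stP f)
    (hfsem : FunSem mem (Internal mem stP) f S W) :
    FuncOnIn mem TrueC f (fun x => mem x S) := by
  refine ⟨?_, ?_, ?_⟩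
  · intro p _ hpf
    have hpint := hH.internal_trans f p hf hpf
    obtain ⟨a, haint, haS, w, hwint, hwW, hopI⟩ := hfsem.1 p hpint hpf
    exact ⟨a, w, trivial, trivial, haS, opair_up hH hpint haint hwint hopI⟩
  · intro x _ hxS
    have hxint := hH.internal_trans S x (std_internal hH hS) hxS
    obtain ⟨w, hwint, _, hfvI⟩ := hfsem.2.1 x hxint hxS
    exact ⟨w, trivial, fval_up hH hxint hwint hfvI⟩
  · intro x y y' _ _ _ h1 h2
    obtain ⟨hxint, hyint⟩ := fval_internal hH hf h1
    have hy'int := (fval_internal hH hf h2).2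
    exact hfsem.2.2 x hxint y hyint y' hy'int (fval_down hH hf h1)
      (fval_down hH hf h2)

theorem extension_lemma' (mem : M → M → Prop) (stP : M → Prop)
    (hH : HSTModel mem stP) (S F : M) (hS : stP S)
    (hF : FuncOnIn mem TrueC F (fun x => stP x ∧ mem x S))
    (hvals : ∀ x, stP x → mem x S → ∀ y, FValIn mem TrueC F x y →
      ∃ z, mem z y ∧ Internal mem stP z) :
    ∃ f, Internal mem stP f ∧ FuncOnIn mem TrueC f (fun x => mem x S) ∧
      ∀ x, stP x → mem x S → ∀ y z, FValIn mem TrueC f x y → FValIn mem TrueC F x z →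
        mem y z := by
  have hext : CExt mem (TrueC : M → Prop) := trueC_ext hH
  -- σS
  obtain ⟨sig, hsigc⟩ := hH.separation StFormula.sigF Fin.elim0 S
  have hsig : ∀ z, mem z sig ↔ mem z S ∧ stP z := by
    intro z; rw [hsigc z, eval_sigF]
  -- collection B1
  obtain ⟨B1, hB1c⟩ := hH.collection StFormula.colF (vec1 F) sig
  have hB1 : ∀ a, mem a sig → ∃ s, mem s B1 ∧ stP s ∧
      ∃ z, mem z s ∧ ∃ y, FValIn mem TrueC F a y ∧ mem z y := by
    intro a ha
    obtain ⟨haS, hast⟩ := (hsig a).1 ha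
    obtain ⟨y, _, hy⟩ := hF.2.1 a trivial ⟨hast, haS⟩
    obtain ⟨z, hzy, s0, hs0st, hzs0⟩ := hvals a hast haS y hy
    obtain ⟨b, hbB1, hbev⟩ := hB1c a ha
      ⟨s0, (eval_colF F a s0).2 ⟨hs0st, z, hzs0, y, hy, hzy⟩⟩
    obtain ⟨hbst, z1, hz1b, hy1⟩ := (eval_colF F a b).1 hbev
    exact ⟨b, hbB1, hbst, z1, hz1b, hy1⟩
  -- T := standardization of B1
  obtain ⟨T, hTst, hTc⟩ := hH.standardization B1
  -- the standard stage
  obtain ⟨W, FSW, f0, hWst, hFSWst, hf0st, hf0mem, hWsem, hFSWsem, hOversem, hBsem⟩ :=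
    st_stage hH hS hTst
  -- W1
  have hW1 : ∀ a, mem a sig → ∃ z, mem z W ∧
      ∃ y, FValIn mem TrueC F a y ∧ mem z y := by
    intro a ha
    obtain ⟨s, hsB1, hsst, z, hzs, hy⟩ := hB1 a ha
    have hsT : mem s T := (hTc s hsst).2 hsB1
    have hzint : Internal mem stP z :=
      hH.internal_trans s z (std_internal hH hsst) hzs
    have hzW : mem z W := (hWsem z hzint).2
      (Or.inl ⟨s, std_internal hH hsst, hsT, hzs⟩)
    exact ⟨z, hzW, hy⟩
  -- D-sets
  have hD : ∀ a, ∃ D, ∀ q, mem q D ↔ ∃ z, mem z W ∧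
      (OPairIn mem TrueC q a z ∧ ∃ y, FValIn mem TrueC F a y ∧ mem z y) := by
    intro a
    have hfunD : ∀ z q q', EvalIn mem stP TrueC StFormula.dF
        (Fin.snoc (Fin.snoc (vec2 F a) z) q) →
        EvalIn mem stP TrueC StFormula.dF (Fin.snoc (Fin.snoc (vec2 F a) z) q') →
        q = q' := by
      intro z q q' h1 h2
      obtain ⟨hop1, _⟩ := (eval_dF F a z q).1 h1
      obtain ⟨hop2, _⟩ := (eval_dF F a z q').1 h2
      exact opair_unique hext trivial trivial hop1 hop2
    obtain ⟨D, hDc⟩ := hH.replacement StFormula.dF (vec2 F a) W hfunD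
    refine ⟨D, fun q => ?_⟩
    rw [hDc q]
    constructor
    · rintro ⟨z, hzW, hev⟩
      exact ⟨z, hzW, (eval_dF F a z q).1 hev⟩
    · rintro ⟨z, hzW, h⟩
      exact ⟨z, hzW, (eval_dF F a z q).2 h⟩
  -- graph h1 of a ↦ D_a and X1 = {D_a : a ∈ σS}
  have hfun1 : ∀ a c c', EvalIn mem stP TrueC StFormula.h1F
      (Fin.snoc (Fin.snoc (vec2 F W) a) c) →
      EvalIn mem stP TrueC StFormula.h1F (Fin.snoc (Fin.snoc (vec2 F W) a) c') →
      c = c' := by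
    intro a c c' h1' h2'
    obtain ⟨b, hb, hcb⟩ := (eval_h1F F W a c).1 h1'
    obtain ⟨b', hb', hcb'⟩ := (eval_h1F F W a c').1 h2'
    have hbb : b = b' := hH.ext b b' fun q => (hb q).trans (hb' q).symm
    subst hbb
    exact opair_unique hext trivial trivial hcb hcb'
  obtain ⟨h1, hh1c⟩ := hH.replacement StFormula.h1F (vec2 F W) sig hfun1
  have hfunx1 : ∀ a b b', EvalIn mem stP TrueC StFormula.x1F
      (Fin.snoc (Fin.snoc (vec2 F W) a) b) →
      EvalIn mem stP TrueC StFormula.x1F (Fin.snoc (Fin.snoc (vec2 F W) a) b') →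
      b = b' := by
    intro a b b' h1' h2'
    have hb := (eval_x1F F W a b).1 h1'
    have hb' := (eval_x1F F W a b').1 h2'
    exact hH.ext b b' fun q => (hb q).trans (hb' q).symm
  obtain ⟨X1, hX1c⟩ := hH.replacement StFormula.x1F (vec2 F W) sig hfunx1
  have hX1char : ∀ b, mem b X1 ↔ ∃ a, mem a sig ∧ ∀ q, mem q b ↔
      ∃ z, mem z W ∧ OPairIn mem TrueC q a z ∧
        ∃ y, FValIn mem TrueC F a y ∧ mem z y := by
    intro b
    rw [hX1c b]
    constructor
    · rintro ⟨a, ha, hev⟩; exact ⟨a, ha, (eval_x1F F W a b).1 hev⟩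
    · rintro ⟨a, ha, h⟩; exact ⟨a, ha, (eval_x1F F W a b).2 h⟩
  have hh1mem : ∀ a b, mem a sig →
      (∀ q, mem q b ↔ ∃ z, mem z W ∧ OPairIn mem TrueC q a z ∧
        ∃ y, FValIn mem TrueC F a y ∧ mem z y) → FValIn mem TrueC h1 a b := by
    intro a b ha hb
    obtain ⟨c, hc⟩ := opair_exists hH a b
    have : mem c h1 := (hh1c c).2 ⟨a, ha, (eval_h1F F W a c).2 ⟨b, hb, hc⟩⟩
    exact ⟨c, trivial, this, hc⟩
  have hh1fun : FuncOnIn mem TrueC h1 (fun z => stP z ∧ mem z S) := by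
    refine ⟨?_, ?_, ?_⟩
    · intro p _ hp
      obtain ⟨a, ha, hev⟩ := (hh1c p).1 hp
      obtain ⟨b, _, hcb⟩ := (eval_h1F F W a p).1 hev
      obtain ⟨haS, hast⟩ := (hsig a).1 ha
      exact ⟨a, b, trivial, trivial, ⟨hast, haS⟩, hcb⟩
    · intro a _ hcl
      have ha : mem a sig := (hsig a).2 ⟨hcl.2, hcl.1⟩
      obtain ⟨b, hb⟩ := hD a
      exact ⟨b, trivial, hh1mem a b ha hb⟩
    · rintro x y y' _ _ _ ⟨p, _, hp, hop⟩ ⟨p', _, hp', hop'⟩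
      obtain ⟨a, ha, hev⟩ := (hh1c p).1 hp
      obtain ⟨b, hb, hcb⟩ := (eval_h1F F W a p).1 hev
      obtain ⟨a', ha', hev'⟩ := (hh1c p').1 hp'
      obtain ⟨b', hb', hcb'⟩ := (eval_h1F F W a' p').1 hev'
      obtain ⟨hxa, hyb⟩ := opair_inj hext trivial trivial trivial trivial hop hcb
      obtain ⟨hxa', hyb'⟩ := opair_inj hext trivial trivial trivial trivial hop' hcb'
      have haa : a' = a := hxa'.symm.trans hxa
      rw [haa] at hb'
      rw [hyb, hyb']
      exact hH.ext b b' fun q => (hb q).trans (hb' q).symm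
  have hX1ss : SSize mem stP X1 := by
    refine ⟨S, h1, hS, hh1fun, ?_⟩
    intro y
    constructor
    · intro hy
      obtain ⟨a, ha, hchar⟩ := (hX1char y).1 hy
      obtain ⟨haS, hast⟩ := (hsig a).1 ha
      exact ⟨a, hast, haS, hh1mem a y ha hchar⟩
    · rintro ⟨a, hast, haS, p, _, hp, hop⟩
      obtain ⟨a', ha', hev⟩ := (hh1c p).1 hp
      obtain ⟨b, hb, hcb⟩ := (eval_h1F F W a' p).1 hev
      obtain ⟨haa, hyb⟩ := opair_inj hext trivial trivial trivial trivial hop hcb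
      subst hyb
      rw [← haa] at ha' hb
      exact (hX1char y).2 ⟨a, ha', hb⟩
  have hX1ne : ∀ D, mem D X1 → ∃ q, mem q D := by
    intro D hD1
    obtain ⟨a, ha, hchar⟩ := (hX1char D).1 hD1
    obtain ⟨z, hzW, hy⟩ := hW1 a ha
    obtain ⟨q, hq⟩ := opair_exists hH a z
    exact ⟨q, (hchar q).2 ⟨z, hzW, hq, hy⟩⟩
  obtain ⟨cf, hcffun, hcfval⟩ := hH.ss_choice X1 hX1ss hX1ne
  -- g
  have hfung : ∀ D q q', EvalIn mem stP TrueC StFormula.gF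
      (Fin.snoc (Fin.snoc (vec1 cf) D) q) →
      EvalIn mem stP TrueC StFormula.gF (Fin.snoc (Fin.snoc (vec1 cf) D) q') →
      q = q' := by
    intro D q q' h1' h2'
    exact hcffun.2.2 D q q' trivial trivial trivial
      ((eval_gF cf D q).1 h1') ((eval_gF cf D q').1 h2')
  obtain ⟨g, hgc⟩ := hH.replacement StFormula.gF (vec1 cf) X1 hfung
  have hgval : ∀ a, mem a sig → ∃ z, FValIn mem TrueC g a z ∧ mem z W ∧
      ∃ y, FValIn mem TrueC F a y ∧ mem z y := by
    intro a ha
    obtain ⟨D, hDchar⟩ := hD a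
    have hDX1 : mem D X1 := (hX1char D).2 ⟨a, ha, hDchar⟩
    obtain ⟨q, _, hq⟩ := hcffun.2.1 D trivial hDX1
    have hqD : mem q D := hcfval D q hDX1 hq
    obtain ⟨z, hzW, hopq, hy⟩ := (hDchar q).1 hqD
    have hqg : mem q g := (hgc q).2 ⟨D, hDX1, (eval_gF cf D q).2 hq⟩
    exact ⟨z, ⟨q, trivial, hqg, hopq⟩, hzW, hy⟩
  have hgmem : ∀ q, mem q g → ∃ a z, mem a sig ∧ OPairIn mem TrueC q a z ∧
      mem z W ∧ ∃ y, FValIn mem TrueC F a y ∧ mem z y := by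
    intro q hq
    obtain ⟨D, hDX1, hev⟩ := (hgc q).1 hq
    have hfv : FValIn mem TrueC cf D q := (eval_gF cf D q).1 hev
    obtain ⟨a, ha, hchar⟩ := (hX1char D).1 hDX1
    have hqD : mem q D := hcfval D q hDX1 hfv
    obtain ⟨z, hzW, hopq, hy⟩ := (hchar q).1 hqD
    exact ⟨a, z, ha, hopq, hzW, hy⟩
  have hgfun : ∀ a z z', FValIn mem TrueC g a z → FValIn mem TrueC g a z' →
      z = z' := by
    rintro a z z' ⟨q, _, hqg, hop⟩ ⟨q', _, hq'g, hop'⟩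
    obtain ⟨D, hDX1, hev⟩ := (hgc q).1 hqg
    obtain ⟨D', hD'X1, hev'⟩ := (hgc q').1 hq'g
    have hfv : FValIn mem TrueC cf D q := (eval_gF cf D q).1 hev
    have hfv' : FValIn mem TrueC cf D' q' := (eval_gF cf D' q').1 hev'
    obtain ⟨a1, ha1, hchar1⟩ := (hX1char D).1 hDX1
    obtain ⟨a2, ha2, hchar2⟩ := (hX1char D').1 hD'X1
    obtain ⟨z1, _, hopq1, _⟩ := (hchar1 q).1 (hcfval D q hDX1 hfv)
    obtain ⟨z2, _, hopq2, _⟩ := (hchar2 q').1 (hcfval D' q' hD'X1 hfv')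
    obtain ⟨haa1, hzz1⟩ := opair_inj hext trivial trivial trivial trivial hop hopq1
    obtain ⟨haa2, hzz2⟩ := opair_inj hext trivial trivial trivial trivial hop' hopq2
    rw [← haa1] at hchar1
    rw [← haa2] at hchar2
    have hDD : D = D' := hH.ext D D' fun w => (hchar1 w).trans (hchar2 w).symm
    subst hDD
    have hqq : q = q' := hcffun.2.2 D q q' trivial trivial trivial hfv hfv'
    subst hqq
    exact (opair_inj hext trivial trivial trivial trivial hop hop').2
  -- the B-family
  have hBex : ∀ a, mem a sig → ∃ B, Internal mem stP B ∧
      ∀ f, mem f B ↔ (mem f FSW ∧ ∃ z, FValIn mem TrueC g a z ∧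
        FValIn mem TrueC f a z) := by
    intro a ha
    obtain ⟨haS, hast⟩ := (hsig a).1 ha
    obtain ⟨z, hgz, hzW, _⟩ := hgval a ha
    have hzint : Internal mem stP z :=
      hH.internal_trans W z (std_internal hH hWst) hzW
    have haint : Internal mem stP a := std_internal hH hast
    obtain ⟨B, hBint, hBchar⟩ := hBsem a haint haS z hzint hzW
    refine ⟨B, hBint, fun f => ?_⟩
    constructor
    · intro hfB
      have hfint := hH.internal_trans B f hBint hfB
      obtain ⟨hfFSW, hfvI⟩ := (hBchar f hfint).1 hfB
      exact ⟨hfFSW, z, hgz, fval_up hH haint hzint hfvI⟩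
    · rintro ⟨hfFSW, z', hgz', hfz'⟩
      have hzz : z' = z := hgfun a z' z hgz' hgz
      subst hzz
      have hfint : Internal mem stP f := ⟨FSW, hFSWst, hfFSW⟩
      exact (hBchar f hfint).2 ⟨hfFSW, fval_down hH hfint hfz'⟩
  -- the family X and its graph hx
  have hfunhx : ∀ a c c', EvalIn mem stP TrueC StFormula.hxF
      (Fin.snoc (Fin.snoc (vec2 g FSW) a) c) →
      EvalIn mem stP TrueC StFormula.hxF (Fin.snoc (Fin.snoc (vec2 g FSW) a) c') →
      c = c' := by
    intro a c c' h1' h2'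
    obtain ⟨B, hB, hcB⟩ := (eval_hxF g FSW a c).1 h1'
    obtain ⟨B', hB', hcB'⟩ := (eval_hxF g FSW a c').1 h2'
    have hBB : B = B' := hH.ext B B' fun q => (hB q).trans (hB' q).symm
    subst hBB
    exact opair_unique hext trivial trivial hcB hcB'
  obtain ⟨hx, hhxc⟩ := hH.replacement StFormula.hxF (vec2 g FSW) sig hfunhx
  have hfunx : ∀ a b b', EvalIn mem stP TrueC StFormula.xF
      (Fin.snoc (Fin.snoc (vec2 g FSW) a) b) →
      EvalIn mem stP TrueC StFormula.xF (Fin.snoc (Fin.snoc (vec2 g FSW) a) b') →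
      b = b' := by
    intro a b b' h1' h2'
    have hb := (eval_xF g FSW a b).1 h1'
    have hb' := (eval_xF g FSW a b').1 h2'
    exact hH.ext b b' fun q => (hb q).trans (hb' q).symm
  obtain ⟨X, hXc⟩ := hH.replacement StFormula.xF (vec2 g FSW) sig hfunx
  have hXchar : ∀ B, mem B X ↔ ∃ a, mem a sig ∧ ∀ f, mem f B ↔
      (mem f FSW ∧ ∃ z, FValIn mem TrueC g a z ∧ FValIn mem TrueC f a z) := by
    intro B
    rw [hXc B]
    constructor
    · rintro ⟨a, ha, hev⟩; exact ⟨a, ha, (eval_xF g FSW a B).1 hev⟩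
    · rintro ⟨a, ha, h⟩; exact ⟨a, ha, (eval_xF g FSW a B).2 h⟩
  have hhxmem : ∀ a B, mem a sig →
      (∀ f, mem f B ↔ (mem f FSW ∧ ∃ z, FValIn mem TrueC g a z ∧
        FValIn mem TrueC f a z)) → FValIn mem TrueC hx a B := by
    intro a B ha hB
    obtain ⟨c, hc⟩ := opair_exists hH a B
    have : mem c hx := (hhxc c).2 ⟨a, ha, (eval_hxF g FSW a c).2 ⟨B, hB, hc⟩⟩
    exact ⟨c, trivial, this, hc⟩
  have hhxfun : FuncOnIn mem TrueC hx (fun z => stP z ∧ mem z S) := by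
    refine ⟨?_, ?_, ?_⟩
    · intro p _ hp
      obtain ⟨a, ha, hev⟩ := (hhxc p).1 hp
      obtain ⟨B, _, hcB⟩ := (eval_hxF g FSW a p).1 hev
      obtain ⟨haS, hast⟩ := (hsig a).1 ha
      exact ⟨a, B, trivial, trivial, ⟨hast, haS⟩, hcB⟩
    · intro a _ hcl
      have ha : mem a sig := (hsig a).2 ⟨hcl.2, hcl.1⟩
      obtain ⟨B, _, hB⟩ := hBex a ha
      exact ⟨B, trivial, hhxmem a B ha hB⟩
    · rintro x y y' _ _ _ ⟨p, _, hp, hop⟩ ⟨p', _, hp', hop'⟩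
      obtain ⟨a, ha, hev⟩ := (hhxc p).1 hp
      obtain ⟨B, hB, hcB⟩ := (eval_hxF g FSW a p).1 hev
      obtain ⟨a', ha', hev'⟩ := (hhxc p').1 hp'
      obtain ⟨B', hB', hcB'⟩ := (eval_hxF g FSW a' p').1 hev'
      obtain ⟨hxa, hyB⟩ := opair_inj hext trivial trivial trivial trivial hop hcB
      obtain ⟨hxa', hyB'⟩ := opair_inj hext trivial trivial trivial trivial hop' hcB'
      have haa : a' = a := hxa'.symm.trans hxa
      rw [haa] at hB'
      rw [hyB, hyB']
      exact hH.ext B B' fun q => (hB q).trans (hB' q).symm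
  have hXss : SSize mem stP X := by
    refine ⟨S, hx, hS, hhxfun, ?_⟩
    intro y
    constructor
    · intro hy
      obtain ⟨a, ha, hchar⟩ := (hXchar y).1 hy
      obtain ⟨haS, hast⟩ := (hsig a).1 ha
      exact ⟨a, hast, haS, hhxmem a y ha hchar⟩
    · rintro ⟨a, hast, haS, p, _, hp, hop⟩
      obtain ⟨a', ha', hev⟩ := (hhxc p).1 hp
      obtain ⟨B, hB, hcB⟩ := (eval_hxF g FSW a' p).1 hev
      obtain ⟨haa, hyB⟩ := opair_inj hext trivial trivial trivial trivial hop hcB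
      subst hyB
      rw [← haa] at ha' hB
      exact (hXchar y).2 ⟨a, ha', hB⟩
  have hXint : ∀ Y, mem Y X → Internal mem stP Y := by
    intro Y hY
    obtain ⟨a, ha, hchar⟩ := (hXchar Y).1 hY
    obtain ⟨B0, hB0int, hB0char⟩ := hBex a ha
    have : Y = B0 := hH.ext Y B0 fun f => (hchar f).trans (hB0char f).symm
    rw [this]; exact hB0int
  -- finite intersection property
  have hFIP : ∀ X', (∃ Y, mem Y X') → SubIn mem TrueC X' X →
      FiniteIn mem TrueC X' → ∃ z, ∀ Y, mem Y X' → mem z Y := by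
    intro X' _ hsub hfin
    obtain ⟨n, -, hnat, eb, -, hebfun, hebinj, hebchar⟩ := hfin
    classical
    -- step lemma
    have hstep : ∀ k j, SuccIn mem TrueC k j →
        (∃ h, mem h FSW ∧ ∀ Y, mem Y X' → ∀ j', FValIn mem TrueC eb Y j' →
          mem j' j → mem h Y) →
        ∃ h, mem h FSW ∧ ∀ Y, mem Y X' → ∀ j', FValIn mem TrueC eb Y j' →
          mem j' k → mem h Y := by
      rintro k j hsucc ⟨h, hhFSW, hh⟩
      by_cases hY0 : ∃ Y0, mem Y0 X' ∧ FValIn mem TrueC eb Y0 j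
      · obtain ⟨Y0, hY0X', hfv0⟩ := hY0
        obtain ⟨x1, hx1sig, hchar0⟩ := (hXchar Y0).1 (hsub Y0 trivial hY0X')
        obtain ⟨hx1S, hx1st⟩ := (hsig x1).1 hx1sig
        obtain ⟨z1, hgz1, hz1W, _⟩ := hgval x1 hx1sig
        have hz1int : Internal mem stP z1 :=
          hH.internal_trans W z1 (std_internal hH hWst) hz1W
        have hx1int : Internal mem stP x1 := std_internal hH hx1st
        have hhint : Internal mem stP h := ⟨FSW, hFSWst, hhFSW⟩
        obtain ⟨f', hf'int, hf'FSW, hf'av, hf'iff⟩ :=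
          hOversem x1 hx1int hx1S z1 hz1int hz1W h hhint hhFSW
        refine ⟨f', hf'FSW, ?_⟩
        intro Y hYX' j' hfv' hj'k
        rcases (hsucc j' trivial).1 hj'k with hj'j | rfl
        · -- j' ∈ j : use that h ∈ Y and modify
          have hhY : mem h Y := hh Y hYX' j' hfv' hj'j
          obtain ⟨x2, hx2sig, hchar2⟩ := (hXchar Y).1 (hsub Y trivial hYX')
          by_cases hx21 : x2 = x1
          · subst hx21
            exact (hchar2 f').2
              ⟨hf'FSW, z1, hgz1, fval_up hH hx1int hz1int hf'av⟩
          · obtain ⟨_, z2, hgz2, hfvh2⟩ := (hchar2 h).1 hhY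
            obtain ⟨hx2S, hx2st⟩ := (hsig x2).1 hx2sig
            obtain ⟨z2', hgz2', hz2'W, _⟩ := hgval x2 hx2sig
            have hz2z : z2 = z2' := hgfun x2 z2 z2' hgz2 hgz2'
            subst hz2z
            have hz2int : Internal mem stP z2 :=
              hH.internal_trans W z2 (std_internal hH hWst) hz2'W
            have hx2int : Internal mem stP x2 := std_internal hH hx2st
            have hfvI : FValIn mem (Internal mem stP) f' x2 z2 :=
              (hf'iff x2 hx2int hx2S z2 hz2int hx21).1
                (fval_down hH hhint hfvh2)
            exact (hchar2 f').2
              ⟨hf'FSW, z2, hgz2, fval_up hH hx2int hz2int hfvI⟩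
        · -- j' = j : Y = Y0
          have hYY0 : Y = Y0 := hebinj Y Y0 j' trivial trivial trivial hfv' hfv0
          subst hYY0
          exact (hchar0 f').2
            ⟨hf'FSW, z1, hgz1, fval_up hH hx1int hz1int hf'av⟩
      · refine ⟨h, hhFSW, ?_⟩
        intro Y hYX' j' hfv' hj'k
        rcases (hsucc j' trivial).1 hj'k with hj'j | rfl
        · exact hh Y hYX' j' hfv' hj'j
        · exact absurd ⟨Y, hYX', hfv'⟩ hY0
    -- the set K of bad k's
    obtain ⟨K, hKc⟩ := hH.separation StFormula.kF (vec3 X' eb FSW) n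
    have hKchar : ∀ k, mem k K ↔ mem k n ∧
        ¬ ∃ h, mem h FSW ∧ ∀ Y, mem Y X' → ∀ j, FValIn mem TrueC eb Y j →
          mem j k → mem h Y := by
      intro k; rw [hKc k, eval_kF]
    have hbase : ∀ k, EmptyIn mem TrueC k →
        ∃ h, mem h FSW ∧ ∀ Y, mem Y X' → ∀ j, FValIn mem TrueC eb Y j →
          mem j k → mem h Y :=
      fun k hk => ⟨f0, hf0mem, fun Y hY j hfv hjk => absurd hjk (hk j trivial)⟩
    have hKempty : ∀ k, ¬ mem k K := by
      by_contra hcon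
      push_neg at hcon
      obtain ⟨w, hw⟩ := hcon
      obtain ⟨w0, -, hw0K, hw0min⟩ := hnat.1.2.2.2.2 K trivial
        (fun z _ hz => ((hKchar z).1 hz).1) ⟨w, trivial, hw⟩
      obtain ⟨hw0n, hw0bad⟩ := (hKchar w0).1 hw0K
      rcases hnat.2 w0 trivial (Or.inr hw0n) with hemp | ⟨j, -, hsucc⟩
      · exact hw0bad (hbase w0 hemp)
      · have hjw0 : mem j w0 := (hsucc j trivial).2 (Or.inr rfl)
        have hjn : mem j n := hnat.1.1 w0 trivial hw0n j trivial hjw0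
        have hjK : ¬ mem j K := hw0min j trivial hjw0
        have hgoodj : ∃ h, mem h FSW ∧ ∀ Y, mem Y X' → ∀ j', FValIn mem TrueC eb Y j' →
            mem j' j → mem h Y := by
          by_contra hbad
          exact hjK ((hKchar j).2 ⟨hjn, hbad⟩)
        exact hw0bad (hstep w0 j hsucc hgoodj)
    have hGoodn : ∃ h, mem h FSW ∧ ∀ Y, mem Y X' → ∀ j, FValIn mem TrueC eb Y j →
        mem j n → mem h Y := by
      rcases hnat.2 n trivial (Or.inl rfl) with hemp | ⟨j, -, hsucc⟩
      · exact hbase n hemp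
      · have hjn : mem j n := (hsucc j trivial).2 (Or.inr rfl)
        have hgoodj : ∃ h, mem h FSW ∧ ∀ Y, mem Y X' → ∀ j', FValIn mem TrueC eb Y j' →
            mem j' j → mem h Y := by
          by_contra hbad
          exact hKempty j ((hKchar j).2 ⟨hjn, hbad⟩)
        exact hstep n j hsucc hgoodj
    obtain ⟨h, hhFSW, hh⟩ := hGoodn
    refine ⟨h, fun Y hY => ?_⟩
    obtain ⟨j, -, hfvj⟩ := hebfun.2.1 Y trivial hY
    have hjn : mem j n := (hebchar j trivial).2 ⟨Y, trivial, hY, hfvj⟩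
    exact hh Y hY j hfvj hjn
  -- conclusion
  by_cases hsigne : ∃ x0, mem x0 sig
  · obtain ⟨x0, hx0⟩ := hsigne
    obtain ⟨fstar, hfstar⟩ := hH.saturation X hXss hXint hFIP
    obtain ⟨B0, hB0int, hB0char⟩ := hBex x0 hx0
    have hB0X : mem B0 X := (hXchar B0).2 ⟨x0, hx0, hB0char⟩
    obtain ⟨hfFSW, -⟩ := (hB0char fstar).1 (hfstar B0 hB0X)
    have hfint : Internal mem stP fstar := ⟨FSW, hFSWst, hfFSW⟩
    have hffun : FuncOnIn mem TrueC fstar (fun x => mem x S) :=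
      funsem_to_funcon hH hS hfint ((hFSWsem fstar hfint).1 hfFSW)
    refine ⟨fstar, hfint, hffun, ?_⟩
    intro x hxst hxS y z hfxy hFxz
    have hxsig : mem x sig := (hsig x).2 ⟨hxS, hxst⟩
    obtain ⟨Bx, hBxint, hBxchar⟩ := hBex x hxsig
    have hBxX : mem Bx X := (hXchar Bx).2 ⟨x, hxsig, hBxchar⟩
    obtain ⟨-, z0, hgz0, hfz0⟩ := (hBxchar fstar).1 (hfstar Bx hBxX)
    have hyz0 : y = z0 := hffun.2.2 x y z0 trivial trivial trivial hfxy hfz0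
    obtain ⟨z1, hgz1, hz1W, y1, hFy1, hz1y1⟩ := hgval x hxsig
    have hz01 : z0 = z1 := hgfun x z0 z1 hgz0 hgz1
    have hy1z : y1 = z := hF.2.2 x y1 z trivial trivial trivial hFy1 hFxz
    rw [hyz0, hz01, ← hy1z]
    exact hz1y1
  · have hfint : Internal mem stP f0 := std_internal hH hf0st
    have hffun : FuncOnIn mem TrueC f0 (fun x => mem x S) :=
      funsem_to_funcon hH hS hfint ((hFSWsem f0 hfint).1 hf0mem)
    refine ⟨f0, hfint, hffun, ?_⟩
    intro x hxst hxS y z hfxy hFxz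
    exact absurd ⟨x, (hsig x).2 ⟨hxS, hxst⟩⟩ hsigne

end Final

end HSTF

namespace HSTF

/-- **Extension.** In any model of HST: if `S` is standard and
`F` is a function defined on `σS = {x ∈ S : st x}` all of whose values contain
an internal element, then there is an internal function `f` defined on `S`
with `f(x) ∈ F(x)` for every `x ∈ σS`. -/
theorem extension_lemma {M : Type u} (mem : M → M → Prop) (stP : M → Prop)
    (hH : HSTModel mem stP) (S F : M) (hS : stP S)
    (hF : FuncOnIn mem TrueC F (fun x => stP x ∧ mem x S))
    (hvals : ∀ x, stP x → mem x S → ∀ y, FValIn mem TrueC F x y →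
      ∃ z, mem z y ∧ Internal mem stP z) :
    ∃ f, Internal mem stP f ∧ FuncOnIn mem TrueC f (fun x => mem x S) ∧
      ∀ x, stP x → mem x S → ∀ y z, FValIn mem TrueC f x y → FValIn mem TrueC F x z →
        mem y z := by
  exact extension_lemma' mem stP hH S F hS hF hvals

end HSTF
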